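/- arXiv:2411.15489 — 9 statements merged into one kernel-verified Lean document; each statement's English description precedes it below -/
import Mathlib

section
/- For every integer n ≥ 1 and every basis index v ∈ ℕ × ℕ × Fin 3, all coefficients of Tⁿ e(v) are nonnegative and their sum equals q^{2n}; consequently, for all basis indices v and w, the w-coefficient of Tⁿ e(v) is at most q^{2n}. -/
/-!
The type-1 edge-transfer operator `T` of the quotient
`PGL(3,F_q[t]) \ B` of the Bruhat–Tits building `B` of `PGL(3,F_q((t⁻¹)))`,
acting on the free ℚ-module with basis `ℕ × ℕ × Fin 3`
(the third coordinate `0,1,2` encodes the edge label `1,2,3`).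
-/

/-- Basis vectors of the free module `(ℕ × ℕ × Fin 3) →₀ ℚ`. -/
noncomputable def ee (v : ℕ × ℕ × Fin 3) : (ℕ × ℕ × Fin 3) →₀ ℚ :=
  Finsupp.single v 1

/-- The value of the transfer operator on basis vectors. -/
noncomputable def Tstep (q : ℕ) : ℕ × ℕ × Fin 3 → ((ℕ × ℕ × Fin 3) →₀ ℚ)
  | (0, n, ⟨0, _⟩) =>
      ((q : ℚ) ^ 2 - 1) • ee (0, n, 1) + ee (0, n + 1, 0)
  | (m + 1, n, ⟨0, _⟩) =>
      ((q : ℚ) - 1) • ee (m + 1, n, 1) + ((q : ℚ) ^ 2 - (q : ℚ)) • ee (m, n + 1, 2) +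
        ee (m + 1, n + 1, 0)
  | (m, 0, ⟨1, _⟩) =>
      ((q : ℚ) ^ 2 - (q : ℚ)) • ee (m, 0, 2) + (q : ℚ) • ee (m + 1, 0, 0)
  | (m, n + 1, ⟨1, _⟩) =>
      ((q : ℚ) ^ 2 - (q : ℚ)) • ee (m, n + 1, 2) + (q : ℚ) • ee (m + 1, n, 1)
  | (0, 0, ⟨2, _⟩) => ((q : ℚ) ^ 2) • ee (0, 0, 0)
  | (0, n + 1, ⟨2, _⟩) => ((q : ℚ) ^ 2) • ee (0, n, 1)
  | (m + 1, n, ⟨2, _⟩) => ((q : ℚ) ^ 2) • ee (m, n, 2)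
  | (_, _, ⟨i + 3, h⟩) => absurd h (by omega)

/-- The type-1 edge transfer operator `T` as a ℚ-linear endomorphism. -/
noncomputable def Tedge (q : ℕ) : Module.End ℚ ((ℕ × ℕ × Fin 3) →₀ ℚ) :=
  Finsupp.lift ((ℕ × ℕ × Fin 3) →₀ ℚ) ℚ (ℕ × ℕ × Fin 3) (Tstep q)

noncomputable def Ssum : ((ℕ × ℕ × Fin 3) →₀ ℚ) →ₗ[ℚ] ℚ :=
  Finsupp.lsum ℚ (fun _ => (LinearMap.id : ℚ →ₗ[ℚ] ℚ))

lemma Ssum_apply (x : (ℕ × ℕ × Fin 3) →₀ ℚ) : Ssum x = x.sum fun _ c => c := rfl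

lemma Ssum_single (a : ℕ × ℕ × Fin 3) (c : ℚ) : Ssum (Finsupp.single a c) = c := by
  simp [Ssum]

lemma Tstep_nonneg (q : ℕ) (hq : 2 ≤ q) (v w : ℕ × ℕ × Fin 3) : 0 ≤ Tstep q v w := by
  have hq2 : (2:ℚ) ≤ (q:ℚ) := by exact_mod_cast hq
  obtain ⟨m, n, i⟩ := v
  match m, n, i with
  | 0, n, ⟨0, _⟩ =>
    simp only [Tstep, ee, Finsupp.add_apply, Finsupp.smul_apply, Finsupp.single_apply,
      smul_eq_mul]
    split_ifs <;> nlinarith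
  | m + 1, n, ⟨0, _⟩ =>
    simp only [Tstep, ee, Finsupp.add_apply, Finsupp.smul_apply, Finsupp.single_apply,
      smul_eq_mul]
    split_ifs <;> nlinarith
  | m, 0, ⟨1, _⟩ =>
    simp only [Tstep, ee, Finsupp.add_apply, Finsupp.smul_apply, Finsupp.single_apply,
      smul_eq_mul]
    split_ifs <;> nlinarith
  | m, n + 1, ⟨1, _⟩ =>
    simp only [Tstep, ee, Finsupp.add_apply, Finsupp.smul_apply, Finsupp.single_apply,
      smul_eq_mul]
    split_ifs <;> nlinarith
  | 0, 0, ⟨2, _⟩ =>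
    simp only [Tstep, ee, Finsupp.smul_apply, Finsupp.single_apply, smul_eq_mul]
    split_ifs <;> nlinarith
  | 0, n + 1, ⟨2, _⟩ =>
    simp only [Tstep, ee, Finsupp.smul_apply, Finsupp.single_apply, smul_eq_mul]
    split_ifs <;> nlinarith
  | m + 1, n, ⟨2, _⟩ =>
    simp only [Tstep, ee, Finsupp.smul_apply, Finsupp.single_apply, smul_eq_mul]
    split_ifs <;> nlinarith

lemma Ssum_Tstep (q : ℕ) (v : ℕ × ℕ × Fin 3) : Ssum (Tstep q v) = (q:ℚ)^2 := by
  obtain ⟨m, n, i⟩ := v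
  match m, n, i with
  | 0, n, ⟨0, _⟩ => simp only [Tstep]; simp [ee, Ssum_single]
  | m + 1, n, ⟨0, _⟩ => simp only [Tstep]; simp [ee, Ssum_single]
  | m, 0, ⟨1, _⟩ => simp only [Tstep]; simp [ee, Ssum_single]
  | m, n + 1, ⟨1, _⟩ => simp only [Tstep]; simp [ee, Ssum_single]
  | 0, 0, ⟨2, _⟩ => simp only [Tstep]; simp [ee, Ssum_single]
  | 0, n + 1, ⟨2, _⟩ => simp only [Tstep]; simp [ee, Ssum_single]
  | m + 1, n, ⟨2, _⟩ => simp only [Tstep]; simp [ee, Ssum_single]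

lemma Tedge_apply (q : ℕ) (x : (ℕ × ℕ × Fin 3) →₀ ℚ) :
    Tedge q x = ∑ i ∈ x.support, x i • Tstep q i := by
  simp [Tedge, Finsupp.lift_apply, Finsupp.sum]

lemma step_nonneg (q : ℕ) (hq : 2 ≤ q) (x : (ℕ × ℕ × Fin 3) →₀ ℚ)
    (hx : ∀ w, 0 ≤ x w) (w : ℕ × ℕ × Fin 3) : 0 ≤ (Tedge q x) w := by
  rw [Tedge_apply, Finsupp.finset_sum_apply]
  exact Finset.sum_nonneg fun i _ => by
    simpa [smul_eq_mul] using mul_nonneg (hx i) (Tstep_nonneg q hq i w)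

lemma step_sum (q : ℕ) (x : (ℕ × ℕ × Fin 3) →₀ ℚ) :
    Ssum (Tedge q x) = (q:ℚ)^2 * Ssum x := by
  rw [Tedge_apply, map_sum]
  have : Ssum x = ∑ i ∈ x.support, x i := rfl
  rw [this, Finset.mul_sum]
  exact Finset.sum_congr rfl fun i _ => by
    rw [map_smul, Ssum_Tstep, smul_eq_mul, mul_comm]

lemma pow_nonneg_sum (q : ℕ) (hq : 2 ≤ q) (n : ℕ) (v : ℕ × ℕ × Fin 3) :
    (∀ w, 0 ≤ ((Tedge q ^ n) (ee v)) w) ∧ Ssum ((Tedge q ^ n) (ee v)) = (q:ℚ) ^ (2 * n) := by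
  induction n with
  | zero =>
    refine ⟨fun w => ?_, ?_⟩
    · simp only [pow_zero, Module.End.one_apply, ee, Finsupp.single_apply]
      split_ifs <;> norm_num
    · simp [ee, Ssum_single]
  | succ n ih =>
    have hp : (Tedge q ^ (n + 1)) (ee v) = Tedge q ((Tedge q ^ n) (ee v)) := by
      rw [pow_succ', Module.End.mul_apply]
    constructor
    · intro w
      rw [hp]
      exact step_nonneg q hq _ ih.1 w
    · rw [hp, step_sum, ih.2, ← pow_add]
      ring_nf

lemma coeff_le_sum (x : (ℕ × ℕ × Fin 3) →₀ ℚ) (hx : ∀ w, 0 ≤ x w) (w : ℕ × ℕ × Fin 3) :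
    x w ≤ Ssum x := by
  have hs : Ssum x = ∑ i ∈ x.support, x i := rfl
  by_cases h : w ∈ x.support
  · rw [hs]; exact Finset.single_le_sum (fun i _ => hx i) h
  · rw [Finsupp.notMem_support_iff.mp h, hs]
    exact Finset.sum_nonneg fun i _ => hx i

/-- For every `n ≥ 1` and every basis index `v`, all coefficients of `Tⁿ e(v)` are
nonnegative, their sum is `q^(2n)`, and consequently each coefficient is at most `q^(2n)`. -/
theorem coeffs_of_pow_transfer_nonneg_sum_eq (q : ℕ) (hq : 2 ≤ q) (n : ℕ) (hn : 1 ≤ n)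
    (v : ℕ × ℕ × Fin 3) :
    (∀ w : ℕ × ℕ × Fin 3, 0 ≤ ((Tedge q ^ n) (ee v)) w) ∧
    (((Tedge q ^ n) (ee v)).sum fun _ c => c) = (q : ℚ) ^ (2 * n) ∧
    (∀ w : ℕ × ℕ × Fin 3, ((Tedge q ^ n) (ee v)) w ≤ (q : ℚ) ^ (2 * n)) := by
  obtain ⟨h1, h2⟩ := pow_nonneg_sum q hq n v
  refine ⟨h1, by rw [← Ssum_apply]; exact h2, fun w => ?_⟩
  calc ((Tedge q ^ n) (ee v)) w ≤ Ssum ((Tedge q ^ n) (ee v)) := coeff_le_sum _ h1 w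
    _ = _ := h2
end

section
/- For every integer n ≥ 1, the set of basis indices v ∈ ℕ × ℕ × Fin 3 such that the v-coefficient of Tⁿ e(v) is nonzero is finite. In particular the diagonal sum Σ_v ⟨Tⁿ e(v), e(v)⟩ is a well-defined rational number. -/
/-!
A nonzero coefficient of `Tᵏ e(v)` at `w` forces a path of length `k` from `v` to `w` along
the steps of nonzero weight, and each step changes `m` and `n` by at most one.
So if `v = (m, n, i)` with `m ≥ k` (resp. `n ≥ k`) has a nonzero diagonal coefficient, there is
a closed path all of whose steps start at `m ≥ 1` (resp. `n ≥ 1`). There is no such cycle,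
because an explicit lexicographic potential strictly increases along those steps. Hence the
diagonal support of `Tᵏ` lies in `[0, k) × [0, k) × Fin 3`.
-/

namespace Relation

variable {α : Type*} {r : α → α → Prop}

def ReachesIn (r : α → α → Prop) : ℕ → α → α → Prop
  | 0, a, b => a = b
  | k + 1, a, b => ∃ c, r a c ∧ ReachesIn r k c b

theorem ReachesIn.transGen {k : ℕ} {a b : α} (h : ReachesIn r (k + 1) a b) : TransGen r a b := by
  induction k generalizing a with
  | zero => obtain ⟨c, hac, rfl⟩ := h; exact .single hac
  | succ k ih => obtain ⟨c, hac, hcb⟩ := h; exact .head hac (ih hcb)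

theorem ReachesIn.restrict {f : α → ℕ} (hf : ∀ ⦃a b⦄, r a b → f a ≤ f b + 1) {k : ℕ} {a b : α}
    (h : ReachesIn r k a b) (hk : k ≤ f a) :
    ReachesIn (fun x y => r x y ∧ 0 < f x) k a b := by
  induction k generalizing a with
  | zero => exact h
  | succ k ih =>
    obtain ⟨c, hac, hcb⟩ := h
    exact ⟨c, ⟨hac, by omega⟩, ih hcb (by have := hf hac; omega)⟩

theorem not_transGen_self_of_lt {β : Type*} [Preorder β] {key : α → β}
    (hkey : ∀ ⦃a b⦄, r a b → key a < key b) (a : α) : ¬ TransGen r a a := fun h => by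
  have := h.lift key fun _ _ hab => hkey hab
  rw [transGen_eq_self] at this
  exact lt_irrefl _ this

theorem lt_of_reachesIn_self {β : Type*} [Preorder β] {f : α → ℕ} {key : α → β}
    (hf : ∀ ⦃a b⦄, r a b → f a ≤ f b + 1) (hkey : ∀ ⦃a b⦄, r a b → 0 < f a → key a < key b)
    {k : ℕ} (hk : 1 ≤ k) {a : α} (h : ReachesIn r k a a) : f a < k := by
  by_contra! hfa
  obtain ⟨k, rfl⟩ := Nat.exists_eq_add_of_le' hk
  exact not_transGen_self_of_lt (fun _ _ hxy => hkey hxy.1 hxy.2) a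
    (h.restrict hf hfa).transGen

end Relation

open Relation Finsupp in
theorem Finsupp.map_pow_supported_le {R α : Type*} [Semiring R] {r : α → α → Prop}
    (f : Module.End R (α →₀ R)) (hf : ∀ a, f (single a 1) ∈ supported R R {b | r a b})
    (k : ℕ) (s : Set α) :
    (supported R R s).map (f ^ k) ≤ supported R R {b | ∃ a ∈ s, ReachesIn r k a b} := by
  induction k generalizing s with
  | zero =>
    rw [pow_zero, Module.End.one_eq_id, Submodule.map_id]
    exact supported_mono fun a ha => ⟨a, ha, rfl⟩
  | succ k ih =>
    have hstep : (supported R R s).map f ≤ supported R R {c | ∃ a ∈ s, r a c} := by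
      rw [supported_eq_span_single, Submodule.map_span_le]
      rintro _ ⟨a, ha, rfl⟩
      refine supported_mono ?_ (hf a)
      exact fun b hb => ⟨a, ha, hb⟩
    rw [pow_succ, Module.End.mul_eq_comp, Submodule.map_comp]
    refine (Submodule.map_mono hstep).trans ((ih _).trans (supported_mono ?_))
    rintro b ⟨c, ⟨a, ha, hac⟩, hcb⟩
    exact ⟨a, ha, c, hac, hcb⟩

/-- `eij` is a step from label `i` to label `j`; for `q ≥ 2` these are exactly the pairs
`(v, w)` with `w` in the support of `Tstep q v`. -/
inductive EdgeStep : ℕ × ℕ × Fin 3 → ℕ × ℕ × Fin 3 → Prop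
  | e01 (m n : ℕ) : EdgeStep (m, n, 0) (m, n, 1)
  | e00 (m n : ℕ) : EdgeStep (m, n, 0) (m, n + 1, 0)
  | e02 (m n : ℕ) : EdgeStep (m + 1, n, 0) (m, n + 1, 2)
  | e12 (m n : ℕ) : EdgeStep (m, n, 1) (m, n, 2)
  | e10 (m : ℕ) : EdgeStep (m, 0, 1) (m + 1, 0, 0)
  | e11 (m n : ℕ) : EdgeStep (m, n + 1, 1) (m + 1, n, 1)
  | e20 : EdgeStep (0, 0, 2) (0, 0, 0)
  | e21 (n : ℕ) : EdgeStep (0, n + 1, 2) (0, n, 1)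
  | e22 (m n : ℕ) : EdgeStep (m + 1, n, 2) (m, n, 2)

theorem EdgeStep.of_Tstep_apply_ne_zero {q : ℕ} {v w : ℕ × ℕ × Fin 3} (h : Tstep q v w ≠ 0) :
    EdgeStep v w := by
  obtain ⟨_ | m, _ | n, _ | _ | _ | i, hi⟩ := v <;> first
    | omega
    | simp only [Tstep, ee, Finsupp.add_apply, Finsupp.smul_apply, Finsupp.single_apply] at h
      split_ifs at h <;> aesop (add safe constructors EdgeStep)

theorem Tedge_ee (q : ℕ) (v : ℕ × ℕ × Fin 3) : Tedge q (ee v) = Tstep q v := by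
  simp [Tedge, ee]

namespace EdgeStep

variable ⦃u w : ℕ × ℕ × Fin 3⦄

theorem fst_le_succ (h : EdgeStep u w) : u.1 ≤ w.1 + 1 := by
  cases h <;> dsimp only <;> omega

theorem snd_le_succ (h : EdgeStep u w) : u.2.1 ≤ w.2.1 + 1 := by
  cases h <;> dsimp only <;> omega

/-- On steps from `m ≥ 1`, label 2 is absorbing and lowers `m`, while steps among labels
0 and 1 raise `2m + n` or the label. -/
def fstPotential (v : ℕ × ℕ × Fin 3) : ℤ ×ₗ ℤ :=
  if v.2.2 = 2 then toLex (1, -v.1)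
  else toLex (0, 2 * v.1 + v.2.1 + if v.2.2 = 1 then 1 else 0)

/-- On steps from `n ≥ 1`, label 0 is never re-entered and its steps raise `n`, while steps
among labels 1 and 2 lower `m + 3n` or the label. -/
def sndPotential (v : ℕ × ℕ × Fin 3) : ℤ ×ₗ ℤ :=
  if v.2.2 = 0 then toLex (0, v.2.1)
  else toLex (1, -(v.1 + 3 * v.2.1 + if v.2.2 = 1 then 1 else 0))

theorem fstPotential_lt (h : EdgeStep u w) (hu : 0 < u.1) : fstPotential u < fstPotential w := by
  cases h <;> simp [fstPotential, Prod.Lex.toLex_lt_toLex] at hu ⊢ <;> omega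

theorem sndPotential_lt (h : EdgeStep u w) (hu : 0 < u.2.1) : sndPotential u < sndPotential w := by
  cases h <;> simp [sndPotential, Prod.Lex.toLex_lt_toLex] at hu ⊢ <;> omega

end EdgeStep

theorem reachesIn_of_Tedge_pow_apply_ne_zero {q k : ℕ} {v w : ℕ × ℕ × Fin 3}
    (h : ((Tedge q ^ k) (ee v)) w ≠ 0) : Relation.ReachesIn EdgeStep k v w := by
  have hstep (a : ℕ × ℕ × Fin 3) :
      Tedge q (Finsupp.single a 1) ∈ Finsupp.supported ℚ ℚ {b | EdgeStep a b} := by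
    rw [Finsupp.mem_supported, ← ee, Tedge_ee]
    exact fun b hb => EdgeStep.of_Tstep_apply_ne_zero (Finsupp.mem_support_iff.1 hb)
  have hv : ee v ∈ Finsupp.supported ℚ ℚ {v} := Finsupp.single_mem_supported ℚ 1 rfl
  obtain ⟨_, rfl, hvw⟩ := Finsupp.map_pow_supported_le (Tedge q) hstep k {v}
    (Submodule.mem_map_of_mem hv) (Finsupp.mem_support_iff.2 h)
  exact hvw

theorem diagonal_support_finite_general (q : ℕ) (n : ℕ) (hn : 1 ≤ n) :
    {v : ℕ × ℕ × Fin 3 | ((Tedge q ^ n) (ee v)) v ≠ 0}.Finite := by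
  refine ((Set.finite_Iio n).prod ((Set.finite_Iio n).prod Set.finite_univ)).subset fun v hv => ?_
  have hcycle := reachesIn_of_Tedge_pow_apply_ne_zero hv
  exact ⟨Relation.lt_of_reachesIn_self EdgeStep.fst_le_succ EdgeStep.fstPotential_lt hn hcycle,
    Relation.lt_of_reachesIn_self EdgeStep.snd_le_succ EdgeStep.sndPotential_lt hn hcycle,
    Set.mem_univ _⟩

/-- For every `n ≥ 1`, the set of basis indices `v` such that the `v`-coefficient of
`Tⁿ e(v)` is nonzero is finite; in particular the diagonal sum
`Σ_v ⟨Tⁿ e(v), e(v)⟩` is a well-defined rational number (here expressed via `finsum`). -/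
theorem diagonal_support_finite (q : ℕ) (hq : 2 ≤ q) (n : ℕ) (hn : 1 ≤ n) :
    {v : ℕ × ℕ × Fin 3 | ((Tedge q ^ n) (ee v)) v ≠ 0}.Finite :=
  diagonal_support_finite_general q n hn
end

section
/- For every integer ℓ ≥ 1, the matrix B_{k,ℓ}(u) is invertible over the field ℚ(u), and det B_{k,ℓ}(u) = 1. -/
/-!
The matrices `A_k(u), B_k(u), C_k(u), D_k(u)` (1-based indices in `{1,…,3k}`) arising from
the truncated type-1 transfer operator of `PGL(3,F_q[t])\B`, and the Schur-complement
recursion `B_{k,ℓ}(u) = B_k(u) − D_k(u)·B_{k,ℓ−1}(u)⁻¹·C_k(u)`.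
-/

/-- Entry of `B_k(u)` at 1-based position `(i,j)`. -/
def Bent {R : Type*} [CommRing R] (q : ℕ) (u : R) (i j : ℕ) : R :=
  if i = j then 1
  else if i = 2 ∧ j = 1 then -((q : R) ^ 2 - 1) * u
  else if i % 3 = 2 ∧ 5 ≤ i ∧ j + 1 = i then -((q : R) - 1) * u
  else if i % 3 = 0 ∧ 3 ≤ i ∧ j = i + 3 then -(q : R) ^ 2 * u
  else if i % 3 = 0 ∧ 3 ≤ i ∧ j + 1 = i then -((q : R) ^ 2 - (q : R)) * u
  else 0

/-- Entry of `A_k(u)` at 1-based position `(i,j)`. -/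
def Aent {R : Type*} [CommRing R] (q : ℕ) (u : R) (i j : ℕ) : R :=
  if i = 1 ∧ j = 3 then -(q : R) ^ 2 * u
  else if i % 3 = 1 ∧ 4 ≤ i ∧ j + 2 = i then -(q : R) * u
  else Bent q u i j

/-- Entry of `C_k(u)` at 1-based position `(i,j)`. -/
def Cent {R : Type*} [CommRing R] (q : ℕ) (u : R) (i j : ℕ) : R :=
  if i = j ∧ i % 3 = 1 then -u
  else if i % 3 = 0 ∧ 3 ≤ i ∧ j = i + 1 then -((q : R) ^ 2 - (q : R)) * u
  else 0

/-- Entry of `D_k(u)` at 1-based position `(i,j)`. -/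
def Dent {R : Type*} [CommRing R] (q : ℕ) (u : R) (i j : ℕ) : R :=
  if i % 3 = 2 ∧ 5 ≤ i ∧ j + 3 = i then -(q : R) * u
  else if i = 2 ∧ j = 3 then -(q : R) ^ 2 * u
  else 0

/-- The `3k × 3k` matrix `B_k(u)`. -/
def Bmat {R : Type*} [CommRing R] (q : ℕ) (u : R) (k : ℕ) :
    Matrix (Fin (3 * k)) (Fin (3 * k)) R := fun i j => Bent q u (i.val + 1) (j.val + 1)

/-- The `3k × 3k` matrix `A_k(u)`. -/
def Amat {R : Type*} [CommRing R] (q : ℕ) (u : R) (k : ℕ) :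
    Matrix (Fin (3 * k)) (Fin (3 * k)) R := fun i j => Aent q u (i.val + 1) (j.val + 1)

/-- The `3k × 3k` matrix `C_k(u)`. -/
def Cmat {R : Type*} [CommRing R] (q : ℕ) (u : R) (k : ℕ) :
    Matrix (Fin (3 * k)) (Fin (3 * k)) R := fun i j => Cent q u (i.val + 1) (j.val + 1)

/-- The `3k × 3k` matrix `D_k(u)`. -/
def Dmat {R : Type*} [CommRing R] (q : ℕ) (u : R) (k : ℕ) :
    Matrix (Fin (3 * k)) (Fin (3 * k)) R := fun i j => Dent q u (i.val + 1) (j.val + 1)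

/-- `Brec q u k n = B_{k,n+1}(u)`:  `Brec 0 = B_k(u)` and
`Brec (n+1) = B_k(u) − D_k(u)·(Brec n)⁻¹·C_k(u)`. -/
noncomputable def Brec {R : Type*} [CommRing R] (q : ℕ) (u : R) (k : ℕ) :
    ℕ → Matrix (Fin (3 * k)) (Fin (3 * k)) R
  | 0 => Bmat q u k
  | n + 1 => Bmat q u k - Dmat q u k * (Brec q u k n)⁻¹ * Cmat q u k

/-- A matrix that is triangular with respect to an injective weight function, with
unit diagonal, has determinant `1`. -/
lemma det_eq_one_of_weight {R : Type*} [CommRing R] {n : ℕ}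
    (M : Matrix (Fin n) (Fin n) R) (w : Fin n → ℕ) (hw : Function.Injective w)
    (h0 : ∀ i j, w i < w j → M i j = 0) (hd : ∀ i, M i i = 1) : M.det = 1 := by
  rw [Matrix.det_apply]
  rw [Finset.sum_eq_single (1 : Equiv.Perm (Fin n))]
  · simp [hd]
  · intro σ _ hσ
    have hex : ∃ i, w (σ i) < w i := by
      by_contra h
      push_neg at h
      apply hσ
      have hsum : ∑ i, w (σ i) = ∑ i, w i := Equiv.sum_comp σ w
      have heq : ∀ i, w i = w (σ i) := by
        intro i
        by_contra hne
        have hlt : w i < w (σ i) := lt_of_le_of_ne (h i) hne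
        have := Finset.sum_lt_sum (fun j _ => h j) ⟨i, Finset.mem_univ i, hlt⟩
        omega
      ext i
      have h1 : σ i = i := hw (heq i).symm
      simp [h1]
    obtain ⟨i, hi⟩ := hex
    have hz : (∏ x, M (σ x) x) = 0 :=
      Finset.prod_eq_zero (Finset.mem_univ i) (h0 _ _ hi)
    rw [hz, smul_zero]
  · intro h; exact absurd (Finset.mem_univ _) h

/-- Support of the off-diagonal entries of `Bent`. -/
lemma Bent_support {R : Type*} [CommRing R] (q : ℕ) (u : R) {i j : ℕ}
    (h : Bent q u i j ≠ 0) :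
    i = j ∨ (i % 3 = 2 ∧ j % 3 = 1) ∨ (i % 3 = 0 ∧ j % 3 = 2) ∨
      (i % 3 = 0 ∧ j = i + 3) := by
  unfold Bent at h
  split_ifs at h with h1 h2 h3 h4 h5 <;>
    first
      | omega
      | exact absurd rfl h

lemma Dent_row {R : Type*} [CommRing R] (q : ℕ) (u : R) {i : ℕ} (h : i % 3 ≠ 2)
    (j : ℕ) : Dent q u i j = 0 := by
  unfold Dent
  rw [if_neg (by omega), if_neg (by omega)]

lemma Cent_col {R : Type*} [CommRing R] (q : ℕ) (u : R) {j : ℕ} (h : j % 3 ≠ 1)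
    (i : ℕ) : Cent q u i j = 0 := by
  unfold Cent
  rw [if_neg (by omega), if_neg (by omega)]

/-- For any matrix `N`, the product `D·N·C` is supported on positions with
row `≡ 2 (mod 3)` and column `≡ 1 (mod 3)` (in 1-based indexing). -/
lemma DNC_support {R : Type*} [CommRing R] (q : ℕ) (u : R) (k : ℕ)
    (N : Matrix (Fin (3 * k)) (Fin (3 * k)) R) (i j : Fin (3 * k))
    (h : ¬((i.1 + 1) % 3 = 2 ∧ (j.1 + 1) % 3 = 1)) :
    (Dmat q u k * N * Cmat q u k) i j = 0 := by
  by_cases hi : (i.1 + 1) % 3 = 2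
  · have hj : (j.1 + 1) % 3 ≠ 1 := fun hj => h ⟨hi, hj⟩
    rw [Matrix.mul_apply]
    refine Finset.sum_eq_zero fun b _ => ?_
    have hc : Cmat q u k b j = 0 := Cent_col q u hj _
    rw [hc, mul_zero]
  · rw [Matrix.mul_assoc, Matrix.mul_apply]
    refine Finset.sum_eq_zero fun a _ => ?_
    have hdz : Dmat q u k i a = 0 := Dent_row q u hi _
    rw [hdz, zero_mul]

/-- The structural invariant preserved by the Schur-complement recursion. -/
def GoodMat {R : Type*} [CommRing R] {k : ℕ}
    (M : Matrix (Fin (3 * k)) (Fin (3 * k)) R) : Prop :=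
  (∀ i, M i i = 1) ∧ ∀ i j, M i j ≠ 0 → i = j ∨
    ((i.1 + 1) % 3 = 2 ∧ (j.1 + 1) % 3 = 1) ∨
    ((i.1 + 1) % 3 = 0 ∧ (j.1 + 1) % 3 = 2) ∨
    ((i.1 + 1) % 3 = 0 ∧ j.1 + 1 = (i.1 + 1) + 3)

lemma goodMat_Bmat {R : Type*} [CommRing R] (q : ℕ) (u : R) (k : ℕ) :
    GoodMat (Bmat q u k) := by
  constructor
  · intro i
    show Bent q u (i.1 + 1) (i.1 + 1) = 1
    unfold Bent
    rw [if_pos rfl]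
  · intro i j h
    have h' : Bent q u (i.1 + 1) (j.1 + 1) ≠ 0 := h
    rcases Bent_support q u h' with heq | hc | hc | hc
    · left; exact Fin.ext (by omega)
    · right; left; exact hc
    · right; right; left; exact hc
    · right; right; right; exact ⟨hc.1, hc.2⟩

lemma goodMat_Brec {R : Type*} [Field R] (q : ℕ) (u : R) (k : ℕ) (n : ℕ) :
    GoodMat (Brec q u k n) := by
  induction n with
  | zero => exact goodMat_Bmat q u k
  | succ n ih =>
    constructor
    · intro i
      show (Bmat q u k - Dmat q u k * (Brec q u k n)⁻¹ * Cmat q u k) i i = 1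
      rw [Matrix.sub_apply, DNC_support q u k _ i i (by omega), sub_zero]
      exact (goodMat_Bmat q u k).1 i
    · intro i j h
      by_cases hc : (i.1 + 1) % 3 = 2 ∧ (j.1 + 1) % 3 = 1
      · right; left; exact hc
      · have h0 : (Dmat q u k * (Brec q u k n)⁻¹ * Cmat q u k) i j = 0 :=
          DNC_support q u k _ i j hc
        have h' : (Bmat q u k - Dmat q u k * (Brec q u k n)⁻¹ * Cmat q u k) i j ≠ 0 := h
        rw [Matrix.sub_apply, h0, sub_zero] at h'
        exact (goodMat_Bmat q u k).2 i j h'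

/-- The weight used to exhibit triangularity: class `1 (mod 3)` first, then class
`2 (mod 3)`, then class `0 (mod 3)` in reverse order. -/
def Wt (k v : ℕ) : ℕ :=
  if v % 3 = 1 then v else if v % 3 = 2 then 3 * k + v else 9 * k - v

lemma det_of_goodMat {R : Type*} [CommRing R] {k : ℕ}
    (M : Matrix (Fin (3 * k)) (Fin (3 * k)) R) (hM : GoodMat M) : M.det = 1 := by
  apply det_eq_one_of_weight M (fun i => Wt k (i.1 + 1))
  · intro i j h
    have hi := i.isLt
    have hj := j.isLt
    simp only [Wt] at h
    apply Fin.ext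
    split_ifs at h <;> omega
  · intro i j hlt
    by_contra hne
    have hi := i.isLt
    have hj := j.isLt
    rcases hM.2 i j hne with heq | h | h | h
    · rw [heq] at hlt; exact absurd hlt (lt_irrefl _)
    all_goals (simp only [Wt] at hlt; split_ifs at hlt <;> omega)
  · exact hM.1

open RatFunc in
/-- For every `ℓ ≥ 1`, the matrix `B_{k,ℓ}(u)` is invertible over `ℚ(u)` and
`det B_{k,ℓ}(u) = 1`. -/
theorem Brec_isUnit_det_eq_one (q k : ℕ) (hq : 2 ≤ q) (hk : 1 ≤ k) (ℓ : ℕ) (hℓ : 1 ≤ ℓ) :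
    IsUnit (Brec q (RatFunc.X : RatFunc ℚ) k (ℓ - 1)) ∧
    (Brec q (RatFunc.X : RatFunc ℚ) k (ℓ - 1)).det = 1 := by
  have hdet := det_of_goodMat _ (goodMat_Brec q (RatFunc.X : RatFunc ℚ) k (ℓ - 1))
  exact ⟨(Matrix.isUnit_iff_isUnit_det _).mpr (hdet ▸ isUnit_one), hdet⟩
end

section
/- For every integer ℓ ≥ 1, the matrix B_{k,ℓ}(u) has the following form: its entry at position (3s−1, 3t−2) equals a_{k,(s,t),ℓ}(u) for all 1 ≤ s,t ≤ k, and all of its other entries coincide with the corresponding entries of B_k(u). -/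
open Polynomial in
/-- `aP q k ℓ s t = a_{k,(s,t),ℓ}(u) ∈ ℚ[u]` (with the junk value `0` at `ℓ = 0`). -/
noncomputable def aP (q k : ℕ) : ℕ → ℕ → ℕ → ℚ[X]
  | 0, _, _ => 0
  | 1, s, t =>
      if s = 1 ∧ t = 1 then -C ((q : ℚ) ^ 2 - 1) * X
      else if s = t then -C ((q : ℚ) - 1) * X
      else 0
  | ℓ + 2, s, t =>
      if s = 1 ∧ t = 1 then
        -C ((q : ℚ) ^ 2 - 1) * X +
          ∑ i ∈ Finset.Icc 1 k,
            C (((q : ℚ) - 1) * (q : ℚ) ^ (2 * i + 1)) * X ^ (i + 2) * aP q k (ℓ + 1) i 1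
      else if s = 1 then
        -C (((q : ℚ) - 1) * (q : ℚ) ^ (2 * t - 1)) * X ^ t +
          ∑ i ∈ Finset.Icc 1 k,
            C (((q : ℚ) - 1) * (q : ℚ) ^ (2 * i + 1)) * X ^ (i + 2) * aP q k (ℓ + 1) i t
      else if s = t then
        -C ((q : ℚ) - 1) * X + C (q : ℚ) * X ^ 2 * aP q k (ℓ + 1) (s - 1) t
      else C (q : ℚ) * X ^ 2 * aP q k (ℓ + 1) (s - 1) t


/-
Order the indices `1, …, 3k` by residue class: `X = {3s−2}`, `Y = {3s−1}`, `Z = {3s}`. In these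
blocks `B_{k,ℓ}(u)` is block lower triangular, `[[1, 0, 0], [A, 1, 0], [0, P, Q]]`, with `A` its
`Y × X` block, `P` scalar and `Q = 1 − q²u·S` for the nilpotent shift `S`, so its inverse is
explicit (`Q⁻¹ = ∑ (q²u·S)ⁱ`). `D_k(u)` lives on the `Y` rows and `C_k(u)` on the `X` columns, so
`D_k B_{k,ℓ}⁻¹ C_k` lives on the `Y × X` block: the Schur complement `B_{k,ℓ+1}` has the same shape,
and its `Y × X` block is computed from `A` by exactly the recursion defining `a_{k,(s,t),ℓ+1}`.
-/

open Matrix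

section BlockAlgebra

variable {S : Type*} [Ring S]

theorem blockLowerTriangular_mul_eq_one (A P Q Q' : S) (hQ : Q * Q' = 1) :
    !![1, 0, 0; A, 1, 0; 0, P, Q] * !![1, 0, 0; -A, 1, 0; Q' * P * A, -(Q' * P), Q'] = 1 := by
  simp [one_fin_three, ← mul_assoc, hQ]

theorem schur_block_product (A P Q' C₁ C₂ D₁ D₂ : S) :
    !![0, 0, 0; 0, D₁, D₂; 0, 0, 0] * !![1, 0, 0; -A, 1, 0; Q' * P * A, -(Q' * P), Q'] *
        !![C₁, 0, 0; 0, 0, 0; C₂, 0, 0] =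
      !![0, 0, 0; D₂ * (Q' * P * A * C₁ + Q' * C₂) - D₁ * A * C₁, 0, 0; 0, 0, 0] := by
  ext i j
  fin_cases i <;> fin_cases j <;> simp [mul_add, add_mul, mul_assoc]
  abel

end BlockAlgebra

section Shift

variable {R : Type*} [CommRing R] {k : ℕ}

def upShift (k : ℕ) : Matrix (Fin k) (Fin k) R :=
  of fun s t => if (t : ℕ) = s + 1 then 1 else 0

def geomUpper (c : R) (k : ℕ) : Matrix (Fin k) (Fin k) R :=
  of fun s t => if (s : ℕ) ≤ t then c ^ ((t : ℕ) - s) else 0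

def topCorner (k : ℕ) : Matrix (Fin k) (Fin k) R :=
  of fun s t => if (s : ℕ) = 0 ∧ (t : ℕ) = 0 then 1 else 0

theorem upShift_mul_apply (A : Matrix (Fin k) (Fin k) R) (s t : Fin k) :
    (upShift k * A : Matrix (Fin k) (Fin k) R) s t =
      if h : (s : ℕ) + 1 < k then A ⟨s + 1, h⟩ t else 0 := by
  simp only [upShift, mul_apply, of_apply, ite_mul, one_mul, zero_mul]
  split_ifs with h
  · rw [Finset.sum_eq_single ⟨s + 1, h⟩ (fun r _ hr => if_neg fun e => hr (Fin.ext e))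
      (by simp)]
    simp
  · exact Finset.sum_eq_zero fun r _ => if_neg (by omega)

theorem mul_upShift_apply (A : Matrix (Fin k) (Fin k) R) (s t : Fin k) :
    (A * upShift k : Matrix (Fin k) (Fin k) R) s t =
      if h : 0 < (t : ℕ) then A s ⟨t - 1, by omega⟩ else 0 := by
  simp only [upShift, mul_apply, of_apply, mul_ite, mul_one, mul_zero]
  split_ifs with h
  · rw [Finset.sum_eq_single ⟨t - 1, by omega⟩
      (fun r _ hr => if_neg fun e => hr (Fin.ext (by dsimp only; omega))) (by simp)]
    exact if_pos (Nat.sub_add_cancel h).symm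
  · exact Finset.sum_eq_zero fun r _ => if_neg (by omega)

theorem upShift_transpose_mul_apply (A : Matrix (Fin k) (Fin k) R) (s t : Fin k) :
    ((upShift k)ᵀ * A : Matrix (Fin k) (Fin k) R) s t =
      if h : 0 < (s : ℕ) then A ⟨s - 1, by omega⟩ t else 0 := by
  simp only [upShift, mul_apply, transpose_apply, of_apply, ite_mul, one_mul, zero_mul]
  split_ifs with h
  · rw [Finset.sum_eq_single ⟨s - 1, by omega⟩
      (fun r _ hr => if_neg fun e => hr (Fin.ext (by dsimp only; omega))) (by simp)]
    exact if_pos (Nat.sub_add_cancel h).symm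
  · exact Finset.sum_eq_zero fun r _ => if_neg (by omega)

theorem topCorner_mul_apply (A : Matrix (Fin k) (Fin k) R) (s t : Fin k) :
    (topCorner k * A : Matrix (Fin k) (Fin k) R) s t = if (s : ℕ) = 0 then A s t else 0 := by
  simp only [topCorner, mul_apply, of_apply, ite_mul, one_mul, zero_mul]
  split_ifs with h
  · rw [Finset.sum_eq_single s
      (fun r _ hr => if_neg fun e => hr (Fin.ext (by omega))) (by simp)]
    simp [h]
  · exact Finset.sum_eq_zero fun r _ => if_neg (by omega)

theorem geomUpper_mul_apply_zero (c : R) (A : Matrix (Fin k) (Fin k) R) (h : 0 < k) (t : Fin k) :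
    (geomUpper c k * A) ⟨0, h⟩ t = ∑ r : Fin k, c ^ (r : ℕ) * A r t := by
  simp only [geomUpper, mul_apply, of_apply, Nat.zero_le, if_true, Nat.sub_zero]

theorem one_sub_smul_upShift_mul_geomUpper (c : R) :
    (1 - c • upShift k) * geomUpper c k = 1 := by
  ext s t
  rw [sub_mul, smul_mul_assoc, Matrix.sub_apply, Matrix.smul_apply, one_mul, upShift_mul_apply,
    one_apply]
  simp only [geomUpper, of_apply, smul_eq_mul, Fin.ext_iff]
  split_ifs <;> first
    | (exfalso; omega)
    | ring1
    | (rw [show (t : ℕ) - s = 0 by omega]; ring1)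
    | (rw [show (t : ℕ) - s = t - (s + 1) + 1 by omega]; ring1)

end Shift

section BlockDecomposition

variable {R : Type*} [CommRing R] {k : ℕ}

/-- `(c, s) ↦ 3s + c`: with 0-based indices, `c = 0, 1, 2` are the classes `X, Y, Z`. -/
def blockEquiv (k : ℕ) : Fin 3 × Fin k ≃ Fin (3 * k) :=
  (Equiv.prodComm _ _).trans (finProdFinEquiv.trans (finCongr (Nat.mul_comm k 3)))

def blockView (k : ℕ) :
    Matrix (Fin (3 * k)) (Fin (3 * k)) R ≃+* Matrix (Fin 3) (Fin 3) (Matrix (Fin k) (Fin k) R) :=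
  (reindexRingEquiv R (blockEquiv k).symm).trans (compRingEquiv (Fin 3) (Fin k) R).symm

theorem blockEquiv_apply_val (c : Fin 3) (s : Fin k) :
    (blockEquiv k (c, s) : ℕ) = c + 3 * s := rfl

theorem blockView_apply (M : Matrix (Fin (3 * k)) (Fin (3 * k)) R) (c c' : Fin 3) (s t : Fin k) :
    blockView k M c c' s t = M (blockEquiv k (c, s)) (blockEquiv k (c', t)) := rfl

theorem blockView_inv_eq {M : Matrix (Fin (3 * k)) (Fin (3 * k)) R}
    {N : Matrix (Fin 3) (Fin 3) (Matrix (Fin k) (Fin k) R)} (h : blockView k M * N = 1) :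
    blockView k M⁻¹ = N := by
  have hM : M * (blockView k).symm N = 1 :=
    (blockView k).injective (by rw [map_mul, RingEquiv.apply_symm_apply, h, map_one])
  rw [Matrix.inv_eq_right_inv hM, RingEquiv.apply_symm_apply]

end BlockDecomposition

section Blocks

variable {R : Type*} [CommRing R] (q u : R) (k : ℕ)

def initialBlock : Matrix (Fin k) (Fin k) R :=
  diagonal fun s => if (s : ℕ) = 0 then -(q ^ 2 - 1) * u else -(q - 1) * u

def blockB (A : Matrix (Fin k) (Fin k) R) : Matrix (Fin 3) (Fin 3) (Matrix (Fin k) (Fin k) R) :=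
  !![1, 0, 0; A, 1, 0; 0, (-(q ^ 2 - q) * u) • 1, 1 - (q ^ 2 * u) • upShift k]

def blockBInv (A : Matrix (Fin k) (Fin k) R) : Matrix (Fin 3) (Fin 3) (Matrix (Fin k) (Fin k) R) :=
  let P : Matrix (Fin k) (Fin k) R := (-(q ^ 2 - q) * u) • 1
  let Q' := geomUpper (q ^ 2 * u) k
  !![1, 0, 0; -A, 1, 0; Q' * P * A, -(Q' * P), Q']

def blockC : Matrix (Fin 3) (Fin 3) (Matrix (Fin k) (Fin k) R) :=
  !![(-u) • 1, 0, 0; 0, 0, 0; (-(q ^ 2 - q) * u) • upShift k, 0, 0]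

def blockD : Matrix (Fin 3) (Fin 3) (Matrix (Fin k) (Fin k) R) :=
  !![0, 0, 0; 0, (-q * u) • (upShift k)ᵀ, (-q ^ 2 * u) • topCorner k; 0, 0, 0]

/-- The recursion for `a_{k,(s,t),ℓ+1}`, in 0-based indices. -/
def schurStep (A : Matrix (Fin k) (Fin k) R) : Matrix (Fin k) (Fin k) R :=
  of fun s t =>
    if (s : ℕ) = 0 then
      (if (t : ℕ) = 0 then -(q ^ 2 - 1) * u
        else -(q - 1) * q ^ (2 * (t : ℕ) + 1) * u ^ ((t : ℕ) + 1)) +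
      ∑ r : Fin k, (q - 1) * q ^ (2 * (r : ℕ) + 3) * u ^ ((r : ℕ) + 3) * A r t
    else
      (if s = t then -(q - 1) * u else 0) + q * u ^ 2 * A ⟨s - 1, by omega⟩ t

variable {q u k}

theorem blockB_apply_congr (A A' : Matrix (Fin k) (Fin k) R) {c c' : Fin 3}
    (h : ¬(c = 1 ∧ c' = 0)) : blockB q u k A c c' = blockB q u k A' c c' := by
  fin_cases c <;> fin_cases c' <;> simp [blockB] at h ⊢

theorem blockB_mul_blockBInv (A : Matrix (Fin k) (Fin k) R) :
    blockB q u k A * blockBInv q u k A = 1 :=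
  blockLowerTriangular_mul_eq_one _ _ _ _ (one_sub_smul_upShift_mul_geomUpper _)

theorem initialBlock_sub_eq_schurStep (A : Matrix (Fin k) (Fin k) R) :
    initialBlock q u k - (((-q ^ 2 * u) • topCorner k) *
      (geomUpper (q ^ 2 * u) k * ((-(q ^ 2 - q) * u) • 1) * A * ((-u) • 1) +
        geomUpper (q ^ 2 * u) k * ((-(q ^ 2 - q) * u) • upShift k)) -
      ((-q * u) • (upShift k)ᵀ) * A * ((-u) • 1)) = schurStep q u k A := by
  ext ⟨_ | s, hs⟩ t
  · simp only [Matrix.mul_smul, Matrix.smul_mul, Matrix.mul_one, smul_smul, Matrix.mul_add,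
      Matrix.sub_apply, Matrix.add_apply, Matrix.smul_apply, smul_eq_mul, topCorner_mul_apply,
      upShift_transpose_mul_apply, mul_upShift_apply, geomUpper_mul_apply_zero, schurStep,
      of_apply, initialBlock, diagonal_apply, Fin.ext_iff, if_true, lt_self_iff_false,
      dite_false, mul_zero, sub_zero]
    have hsum : -u * (-(q ^ 2 - q) * u) * (-q ^ 2 * u) *
          ∑ r : Fin k, (q ^ 2 * u) ^ (r : ℕ) * A r t =
        -∑ r : Fin k, (q - 1) * q ^ (2 * (r : ℕ) + 3) * u ^ ((r : ℕ) + 3) * A r t := by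
      rw [Finset.mul_sum, ← Finset.sum_neg_distrib]
      exact Finset.sum_congr rfl fun r _ => by ring
    rw [hsum]
    rcases t with ⟨_ | t, ht⟩
    · simp only [lt_self_iff_false, dite_false, if_true, mul_zero]
      ring
    · simp only [Nat.add_one_ne_zero, Nat.zero_lt_succ, dite_true, if_false, geomUpper,
        of_apply, Nat.zero_le, if_true, add_tsub_cancel_right, Nat.sub_zero,
        (Nat.succ_ne_zero _).symm]
      ring
  · simp only [Matrix.mul_smul, Matrix.smul_mul, Matrix.mul_one, smul_smul, Matrix.mul_add,
      Matrix.sub_apply, Matrix.add_apply, Matrix.smul_apply, smul_eq_mul, topCorner_mul_apply,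
      upShift_transpose_mul_apply, schurStep, of_apply, initialBlock, diagonal_apply,
      Nat.add_one_ne_zero, if_false, Nat.zero_lt_succ, dite_true, mul_zero,
      add_tsub_cancel_right, Fin.ext_iff]
    ring

theorem blockB_sub_blockD_mul_blockBInv_mul_blockC (A : Matrix (Fin k) (Fin k) R) :
    blockB q u k (initialBlock q u k) - blockD q u k * blockBInv q u k A * blockC q u k =
      blockB q u k (schurStep q u k A) := by
  rw [blockD, blockBInv, blockC, schur_block_product]
  simp only [blockB, ← initialBlock_sub_eq_schurStep]
  ext i j : 1
  fin_cases i <;> fin_cases j <;> simp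

end Blocks

section BlockView

variable {R : Type*} [CommRing R] {q : ℕ} {u : R} {k : ℕ}

theorem blockView_Bmat :
    blockView k (Bmat q u k) = blockB (q : R) u k (initialBlock (q : R) u k) := by
  ext c c' s t
  simp only [blockView_apply, Bmat, blockEquiv_apply_val]
  fin_cases c <;> fin_cases c' <;>
    simp only [blockB, initialBlock, upShift, of_apply, cons_val', cons_val, cons_val_fin_one,
      cons_val_one, cons_val_zero, Fin.isValue, Fin.zero_eta, Fin.mk_one, Fin.reduceFinMk,
      Matrix.zero_apply, one_apply, Matrix.sub_apply, Matrix.smul_apply, diagonal_apply,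
      smul_eq_mul, Fin.ext_iff, Bent] <;>
    split_ifs <;> first | rfl | (exfalso; omega) | ring1

theorem blockView_Cmat : blockView k (Cmat q u k) = blockC (q : R) u k := by
  ext c c' s t
  simp only [blockView_apply, Cmat, blockEquiv_apply_val]
  fin_cases c <;> fin_cases c' <;>
    simp only [blockC, upShift, of_apply, cons_val', cons_val, cons_val_fin_one,
      cons_val_one, cons_val_zero, Fin.isValue, Fin.zero_eta, Fin.mk_one, Fin.reduceFinMk,
      Matrix.zero_apply, one_apply, Matrix.smul_apply, smul_eq_mul, Fin.ext_iff, Cent] <;>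
    split_ifs <;> first | rfl | (exfalso; omega) | ring1

theorem blockView_Dmat : blockView k (Dmat q u k) = blockD (q : R) u k := by
  ext c c' s t
  simp only [blockView_apply, Dmat, blockEquiv_apply_val]
  fin_cases c <;> fin_cases c' <;>
    simp only [blockD, upShift, topCorner, of_apply, cons_val', cons_val, cons_val_fin_one,
      cons_val_one, cons_val_zero, Fin.isValue, Fin.zero_eta, Fin.mk_one, Fin.reduceFinMk,
      Matrix.zero_apply, transpose_apply, Matrix.smul_apply, smul_eq_mul, Dent] <;>
    split_ifs <;> first | rfl | (exfalso; omega) | ring1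

theorem blockView_Brec (n : ℕ) :
    blockView k (Brec q u k n) =
      blockB (q : R) u k ((schurStep (q : R) u k)^[n] (initialBlock (q : R) u k)) := by
  induction n with
  | zero => exact blockView_Bmat
  | succ n ih =>
    rw [Brec, map_sub, map_mul, map_mul, blockView_Bmat, blockView_Cmat, blockView_Dmat,
      blockView_inv_eq (ih ▸ blockB_mul_blockBInv _), blockB_sub_blockD_mul_blockBInv_mul_blockC,
      Function.iterate_succ_apply']

end BlockView

theorem sum_Icc_one_eq_sum_fin {M : Type*} [AddCommMonoid M] (f : ℕ → M) (k : ℕ) :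
    ∑ i ∈ Finset.Icc 1 k, f i = ∑ r : Fin k, f (r + 1) := by
  rw [← Finset.Ico_add_one_right_eq_Icc, Finset.sum_Ico_eq_sum_range, add_tsub_cancel_right,
    ← Fin.sum_univ_eq_sum_range]
  simp only [add_comm 1]

theorem schurStep_iterate_apply (q k n : ℕ) (s t : Fin k) :
    (schurStep (q : RatFunc ℚ) RatFunc.X k)^[n] (initialBlock (q : RatFunc ℚ) RatFunc.X k) s t =
      algebraMap (Polynomial ℚ) (RatFunc ℚ) (aP q k (n + 1) (s + 1) (t + 1)) := by
  induction n generalizing s t with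
  | zero =>
    simp only [Function.iterate_zero, id, initialBlock, diagonal_apply, aP, Fin.ext_iff]
    split_ifs <;> first | (exfalso; omega) | simp
  | succ n ih =>
    rw [Function.iterate_succ_apply']
    rcases s with ⟨_ | s, hs⟩
    · rcases t with ⟨_ | t, ht⟩
      · simp only [schurStep, of_apply, ih, aP, if_true, true_and, zero_add,
          sum_Icc_one_eq_sum_fin, map_add, map_neg, map_mul, map_sum, map_pow, map_sub, map_one,
          map_natCast, RatFunc.algebraMap_X]
        congr 1
      · simp only [schurStep, of_apply, ih, aP, if_true, true_and, zero_add,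
          Nat.add_one_ne_zero, add_eq_right, if_false,
          show 2 * (t + 1 + 1) - 1 = 2 * (t + 1) + 1 by omega,
          sum_Icc_one_eq_sum_fin, map_add, map_neg, map_mul, map_sum, map_pow, map_sub, map_one,
          map_natCast, RatFunc.algebraMap_X]
        congr 1
        ring
    · simp only [schurStep, of_apply, ih, aP, Nat.add_one_ne_zero, if_false, false_and,
        add_eq_right, add_tsub_cancel_right, Fin.ext_iff, Nat.add_right_cancel_iff]
      split_ifs
      · simp only [map_add, map_neg, map_mul, map_pow, map_sub, map_one, map_natCast,
          RatFunc.algebraMap_X]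
      · simp only [map_mul, map_pow, map_natCast, RatFunc.algebraMap_X, zero_add]

/-- For every `ℓ ≥ 1`, the matrix `B_{k,ℓ}(u)` has entry `a_{k,(s,t),ℓ}(u)` at the 1-based
position `(3s−1, 3t−2)` for all `1 ≤ s,t ≤ k`, and all of its other entries coincide with
the corresponding entries of `B_k(u)`. -/
theorem Brec_entries (q k : ℕ) (ℓ : ℕ) (hℓ : 1 ≤ ℓ) :
    (∀ (s t : ℕ) (hs1 : 1 ≤ s) (hs2 : s ≤ k) (ht1 : 1 ≤ t) (ht2 : t ≤ k),
      Brec q (RatFunc.X : RatFunc ℚ) k (ℓ - 1)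
          ⟨3 * s - 2, by omega⟩ ⟨3 * t - 3, by omega⟩ =
        algebraMap (Polynomial ℚ) (RatFunc ℚ) (aP q k ℓ s t)) ∧
    (∀ i j : Fin (3 * k), ¬ ((i.val + 1) % 3 = 2 ∧ (j.val + 1) % 3 = 1) →
      Brec q (RatFunc.X : RatFunc ℚ) k (ℓ - 1) i j =
        Bmat q (RatFunc.X : RatFunc ℚ) k i j) := by
  obtain ⟨n, rfl⟩ : ∃ n, ℓ = n + 1 := ⟨ℓ - 1, by omega⟩
  rw [add_tsub_cancel_right]
  refine ⟨fun s t hs1 hs2 ht1 ht2 => ?_, fun i j hij => ?_⟩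
  · have hi : (⟨3 * s - 2, by omega⟩ : Fin (3 * k)) = blockEquiv k (1, ⟨s - 1, by omega⟩) :=
      Fin.ext (by rw [blockEquiv_apply_val]; simp only [Fin.val_one]; omega)
    have hj : (⟨3 * t - 3, by omega⟩ : Fin (3 * k)) = blockEquiv k (0, ⟨t - 1, by omega⟩) :=
      Fin.ext (by rw [blockEquiv_apply_val]; simp only [Fin.val_zero]; omega)
    rw [hi, hj, ← blockView_apply (Brec q _ k n), blockView_Brec]
    simp only [blockB, of_apply, cons_val', cons_val_one, cons_val_zero, schurStep_iterate_apply]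
    rw [Nat.sub_add_cancel hs1, Nat.sub_add_cancel ht1]
  · obtain ⟨⟨c, s⟩, rfl⟩ := (blockEquiv k).surjective i
    obtain ⟨⟨c', t⟩, rfl⟩ := (blockEquiv k).surjective j
    rw [← blockView_apply (Brec q _ k n), ← blockView_apply (Bmat q _ k), blockView_Brec,
      blockView_Bmat, blockB_apply_congr _ _ fun h => hij ?_]
    rw [blockEquiv_apply_val, blockEquiv_apply_val, h.1, h.2]
    omega
end

section
/- For each degree d ≥ 0, the u^d-coefficient of a_{k,(1,1),ℓ}(u) is eventually constant as ℓ → ∞, and the resulting limit formal power series α_{k,(1,1)}(u) ∈ ℚ[[u]] satisfies α_{k,(1,1)}(u) = −(q²−1)u · (1 − Σ_{i=1}^{k}(q−1)q^{3i}u^{3i})⁻¹, where the inverse is taken in ℚ[[u]] (the series inverted has constant term 1). -/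
/-!
Down the first column (`t = 1`, `s ≥ 2`) the recursion only shifts, so
`a_{(i,1),ℓ} = q^{i-1} u^{2(i-1)} a_{(1,1),ℓ-i+1}`, and the recursion for `a_{(1,1),ℓ}` closes up:
`a_{(1,1),ℓ+2} = −(q²−1)u + Σ_{i=1}^{k} (q−1) q^{3i} u^{3i} a_{(1,1),ℓ+2−i}`.
The series `α = −(q²−1)u (1 − S)⁻¹`, `S = Σ_{i=1}^{k} (q−1) q^{3i} u^{3i}`, is a fixed point of the
same recursion, so the errors `a_{(1,1),ℓ} − α` satisfy a homogeneous recursion whose coefficients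
`u^{3i}` raise the `u`-adic order by more than the lag `i`; hence the error vanishes to order
`ℓ − k − 1`.
-/

section FirstColumn

open Polynomial

variable (q k : ℕ)

lemma aP_succ_succ_one (ℓ : ℕ) {i : ℕ} (hi : 1 ≤ i) :
    aP q k (ℓ + 1) (i + 1) 1 = C (q : ℚ) * X ^ 2 * aP q k ℓ i 1 := by
  cases ℓ with
  | zero => simp [aP, show i ≠ 0 by omega]
  | succ ℓ => rw [aP, if_neg (by omega), if_neg (by omega), if_neg (by omega), Nat.add_sub_cancel]

lemma aP_add_succ_one (m i : ℕ) :
    aP q k (m + i) (i + 1) 1 = C ((q : ℚ) ^ i) * X ^ (2 * i) * aP q k m 1 1 := by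
  induction i with
  | zero => simp
  | succ i ih =>
    rw [← add_assoc, aP_succ_succ_one q k _ (Nat.le_add_left 1 i), ih, pow_succ (q : ℚ), C_mul]
    ring

lemma aP_one_one_add_two {ℓ : ℕ} (hℓ : k ≤ ℓ + 2) :
    aP q k (ℓ + 2) 1 1 = -C ((q : ℚ) ^ 2 - 1) * X +
      ∑ i ∈ Finset.Icc 1 k,
        C (((q : ℚ) - 1) * (q : ℚ) ^ (3 * i)) * X ^ (3 * i) * aP q k (ℓ + 2 - i) 1 1 := by
  rw [aP, if_pos ⟨rfl, rfl⟩]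
  congr 1
  refine Finset.sum_congr rfl fun i hi => ?_
  obtain ⟨hi1, hik⟩ := Finset.mem_Icc.mp hi
  obtain ⟨j, rfl⟩ : ∃ j, i = j + 1 := ⟨i - 1, by omega⟩
  rw [show ℓ + 1 = (ℓ + 2 - (j + 1)) + j by omega, aP_add_succ_one]
  simp only [C_mul, C_pow]
  ring

end FirstColumn

noncomputable def sumSeries (q k : ℕ) : PowerSeries ℚ :=
  ∑ i ∈ Finset.Icc 1 k,
    PowerSeries.C (((q : ℚ) - 1) * (q : ℚ) ^ (3 * i)) * PowerSeries.X ^ (3 * i)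

section Limit

open PowerSeries

variable (q k : ℕ)

lemma constantCoeff_sumSeries : constantCoeff (sumSeries q k) = 0 := by
  simp only [sumSeries, map_sum, map_mul, map_pow, constantCoeff_X]
  exact Finset.sum_eq_zero fun i hi => by
    rw [zero_pow (by have := (Finset.mem_Icc.mp hi).1; omega), mul_zero]

lemma neg_C_mul_X_mul_inv_one_sub_sumSeries_eq :
    -C ((q : ℚ) ^ 2 - 1) * X * (1 - sumSeries q k)⁻¹ =
      -C ((q : ℚ) ^ 2 - 1) * X +
        sumSeries q k * (-C ((q : ℚ) ^ 2 - 1) * X * (1 - sumSeries q k)⁻¹) := by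
  have h : (1 - sumSeries q k) * (1 - sumSeries q k)⁻¹ = 1 :=
    PowerSeries.mul_inv_cancel _ (by simp [constantCoeff_sumSeries])
  linear_combination (-C ((q : ℚ) ^ 2 - 1) * X) * h

lemma coe_aP_one_one_add_two {ℓ : ℕ} (hℓ : k ≤ ℓ + 2) :
    (aP q k (ℓ + 2) 1 1 : ℚ⟦X⟧) = -C ((q : ℚ) ^ 2 - 1) * X +
      ∑ i ∈ Finset.Icc 1 k,
        C (((q : ℚ) - 1) * (q : ℚ) ^ (3 * i)) * X ^ (3 * i) * (aP q k (ℓ + 2 - i) 1 1 : ℚ⟦X⟧) := by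
  rw [aP_one_one_add_two q k hℓ, ← Polynomial.coeToPowerSeries.ringHom_apply, map_add, map_sum]
  simp only [map_mul, map_neg, map_pow, Polynomial.coeToPowerSeries.ringHom_apply,
    Polynomial.coe_C, Polynomial.coe_X]

lemma X_pow_dvd_coe_aP_one_one_sub {α : ℚ⟦X⟧}
    (hα : α = -C ((q : ℚ) ^ 2 - 1) * X + sumSeries q k * α) (ℓ : ℕ) :
    X ^ (ℓ + 1 - k) ∣ (aP q k (ℓ + 2) 1 1 : ℚ⟦X⟧) - α := by
  induction ℓ using Nat.strong_induction_on with | _ ℓ ih => ?_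
  rcases lt_or_ge ℓ k with hℓ | hkℓ
  · simp [Nat.sub_eq_zero_of_le (Nat.succ_le_of_lt hℓ)]
  have herr : (aP q k (ℓ + 2) 1 1 : ℚ⟦X⟧) - α = ∑ i ∈ Finset.Icc 1 k,
      C (((q : ℚ) - 1) * (q : ℚ) ^ (3 * i)) * X ^ (3 * i) *
        ((aP q k (ℓ + 2 - i) 1 1 : ℚ⟦X⟧) - α) := by
    conv_lhs => rw [coe_aP_one_one_add_two q k (by omega), hα, sumSeries, Finset.sum_mul]
    simp only [mul_sub, Finset.sum_sub_distrib]
    ring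
  rw [herr]
  refine Finset.dvd_sum fun i hi => ?_
  obtain ⟨hi1, hik⟩ := Finset.mem_Icc.mp hi
  rw [mul_assoc, show ℓ + 2 - i = ℓ - i + 2 by omega]
  refine Dvd.dvd.mul_left ?_ _
  calc X ^ (ℓ + 1 - k) ∣ X ^ (3 * i + (ℓ - i + 1 - k)) := pow_dvd_pow _ (by omega)
    _ ∣ X ^ (3 * i) * ((aP q k (ℓ - i + 2) 1 1 : ℚ⟦X⟧) - α) := by
      rw [pow_add]; exact mul_dvd_mul_left _ (ih _ (by omega))

end Limit

open PowerSeries in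
theorem aP_one_one_tendsto_general (q k : ℕ) :
    ∀ d : ℕ, ∃ L : ℕ, ∀ ℓ : ℕ, L ≤ ℓ → 1 ≤ ℓ →
      (aP q k ℓ 1 1).coeff d =
        PowerSeries.coeff (R := ℚ) d
          (-(C (R := ℚ) ((q : ℚ) ^ 2 - 1)) * X *
            (1 - ∑ i ∈ Finset.Icc 1 k,
                C (R := ℚ) (((q : ℚ) - 1) * (q : ℚ) ^ (3 * i)) * X ^ (3 * i))⁻¹) := by
  intro d
  refine ⟨d + k + 2, fun ℓ hℓ _ => ?_⟩
  obtain ⟨m, rfl⟩ : ∃ m, ℓ = m + 2 := ⟨ℓ - 2, by omega⟩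
  have hdvd := X_pow_dvd_coe_aP_one_one_sub q k
    (neg_C_mul_X_mul_inv_one_sub_sumSeries_eq q k) m
  have hcoeff := X_pow_dvd_iff.mp hdvd d (by omega)
  rwa [map_sub, sub_eq_zero, Polynomial.coeff_coe] at hcoeff

open PowerSeries in
/-- For each degree `d`, the `u^d`-coefficient of `a_{k,(1,1),ℓ}(u)` is eventually constant
as `ℓ → ∞`, and the limit power series is
`α_{k,(1,1)}(u) = −(q²−1)u · (1 − Σ_{i=1}^{k}(q−1)q^{3i}u^{3i})⁻¹` in `ℚ[[u]]`. -/
theorem aP_one_one_tendsto (q k : ℕ) (hq : 2 ≤ q) (hk : 1 ≤ k) :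
    ∀ d : ℕ, ∃ L : ℕ, ∀ ℓ : ℕ, L ≤ ℓ → 1 ≤ ℓ →
      (aP q k ℓ 1 1).coeff d =
        PowerSeries.coeff (R := ℚ) d
          (-(C (R := ℚ) ((q : ℚ) ^ 2 - 1)) * X *
            (1 - ∑ i ∈ Finset.Icc 1 k,
                C (R := ℚ) (((q : ℚ) - 1) * (q : ℚ) ^ (3 * i)) * X ^ (3 * i))⁻¹) :=
  aP_one_one_tendsto_general q k
end

section
/- For every t with 2 ≤ t ≤ k and each degree d ≥ 0, the u^d-coefficient of a_{k,(1,t),ℓ}(u) is eventually constant as ℓ → ∞, and the resulting limit formal power series α_{k,(1,t)}(u) ∈ ℚ[[u]] satisfies α_{k,(1,t)}(u) = (−(q−1)q^{2t−1}uᵗ − Σ_{i=t}^{k}(q−1)²q^{3i−t+1}u^{3i−2t+3}) · (1 − Σ_{i=1}^{k}(q−1)q^{3i}u^{3i})⁻¹, where the inverse is taken in ℚ[[u]]. -/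
open PowerSeries

noncomputable def alphaDen (q k : ℕ) : ℚ⟦X⟧ :=
  1 - ∑ i ∈ Finset.Icc 1 k, C (((q : ℚ) - 1) * (q : ℚ) ^ (3 * i)) * X ^ (3 * i)

noncomputable def alphaNum (q k t : ℕ) : ℚ⟦X⟧ :=
  -C (((q : ℚ) - 1) * (q : ℚ) ^ (2 * t - 1)) * X ^ t -
    ∑ i ∈ Finset.Icc t k, C (((q : ℚ) - 1) ^ 2 * (q : ℚ) ^ (3 * i - t + 1)) * X ^ (3 * i - 2 * t + 3)

noncomputable def alpha (q k t : ℕ) : ℚ⟦X⟧ := alphaNum q k t * (alphaDen q k)⁻¹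

noncomputable def aLimit (q k t s : ℕ) : ℚ⟦X⟧ :=
  (C (q : ℚ) * X ^ 2) ^ (s - 1) * alpha q k t -
    if t ≤ s then C ((q : ℚ) - 1) * (C (q : ℚ) * X ^ 2) ^ (s - t) * X else 0

noncomputable def aStep (q k t : ℕ) (f : ℕ → ℚ⟦X⟧) (s : ℕ) : ℚ⟦X⟧ :=
  if s = 1 then
    -C (((q : ℚ) - 1) * (q : ℚ) ^ (2 * t - 1)) * X ^ t +
      ∑ i ∈ Finset.Icc 1 k, C (((q : ℚ) - 1) * (q : ℚ) ^ (2 * i + 1)) * X ^ (i + 2) * f i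
  else (if s = t then -C ((q : ℚ) - 1) * X else 0) + C (q : ℚ) * X ^ 2 * f (s - 1)

section

variable (q k : ℕ) {t : ℕ}

lemma alpha_mul_alphaDen : alpha q k t * alphaDen q k = alphaNum q k t := by
  have hconst : constantCoeff (alphaDen q k) = 1 := by
    rw [alphaDen, map_sub, map_sum, map_one, sub_eq_self]
    exact Finset.sum_eq_zero fun i hi => by
      simp [Nat.one_le_iff_ne_zero.1 (Finset.mem_Icc.1 hi).1]
  rw [alpha, mul_assoc, PowerSeries.inv_mul_cancel _ (by simp [hconst]), mul_one]

lemma X_sq_dvd_alpha (ht : 2 ≤ t) : (X : ℚ⟦X⟧) ^ 2 ∣ alpha q k t := by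
  refine Dvd.dvd.mul_right (dvd_sub ?_ (Finset.dvd_sum fun i hi => ?_)) _
  · exact (pow_dvd_pow X ht).mul_left _
  · exact (pow_dvd_pow X (by grind)).mul_left _

lemma aLimit_one (ht : 2 ≤ t) : aLimit q k t 1 = alpha q k t := by
  simp [aLimit, show ¬ t ≤ 1 by omega]

lemma C_mul_X_pow_mul_aLimit {i : ℕ} (hi : 1 ≤ i) :
    C (((q : ℚ) - 1) * (q : ℚ) ^ (2 * i + 1)) * X ^ (i + 2) * aLimit q k t i =
      C (((q : ℚ) - 1) * (q : ℚ) ^ (3 * i)) * X ^ (3 * i) * alpha q k t -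
        if t ≤ i then C (((q : ℚ) - 1) ^ 2 * (q : ℚ) ^ (3 * i - t + 1)) * X ^ (3 * i - 2 * t + 3)
        else 0 := by
  obtain ⟨m, rfl⟩ : ∃ m, i = m + 1 := ⟨i - 1, by omega⟩
  rw [aLimit, mul_sub]
  congr 1
  · simp only [Nat.add_sub_cancel, map_mul, map_pow, map_sub, map_one, map_natCast]
    ring
  · split_ifs with hti
    · obtain ⟨j, hj⟩ : ∃ j, m + 1 = t + j := ⟨m + 1 - t, by omega⟩
      rw [hj, show t + j - t = j by omega, show 3 * (t + j) - t + 1 = 2 * t + 3 * j + 1 by omega,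
        show 3 * (t + j) - 2 * t + 3 = t + 3 * j + 3 by omega]
      simp only [map_mul, map_pow, map_sub, map_one, map_natCast]
      ring
    · rw [mul_zero]

lemma alpha_eq_aStep_aLimit_one (ht : 1 ≤ t) : alpha q k t = aStep q k t (aLimit q k t) 1 := by
  have hfilter : (Finset.Icc 1 k).filter (t ≤ ·) = Finset.Icc t k := by
    ext i
    simp only [Finset.mem_filter, Finset.mem_Icc]
    omega
  have hsum : ∑ i ∈ Finset.Icc 1 k,
        C (((q : ℚ) - 1) * (q : ℚ) ^ (2 * i + 1)) * X ^ (i + 2) * aLimit q k t i =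
      (1 - alphaDen q k) * alpha q k t - ∑ i ∈ Finset.Icc t k,
        C (((q : ℚ) - 1) ^ 2 * (q : ℚ) ^ (3 * i - t + 1)) * X ^ (3 * i - 2 * t + 3) := by
    rw [Finset.sum_congr rfl fun i hi => C_mul_X_pow_mul_aLimit q k (Finset.mem_Icc.1 hi).1,
      Finset.sum_sub_distrib, ← Finset.sum_mul, ← Finset.sum_filter, hfilter, alphaDen,
      sub_sub_cancel]
  have hα := alpha_mul_alphaDen q k (t := t)
  rw [alphaNum] at hα
  rw [aStep, if_pos rfl, hsum]
  linear_combination hα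

lemma aLimit_eq_aStep_of_two_le {s : ℕ} (hs : 2 ≤ s) :
    aLimit q k t s = aStep q k t (aLimit q k t) s := by
  obtain ⟨m, rfl⟩ : ∃ m, s = m + 2 := ⟨s - 2, by omega⟩
  simp only [aLimit, aStep, if_neg (show m + 2 ≠ 1 by omega), show m + 2 - 1 = m + 1 from rfl,
    Nat.add_sub_cancel, map_sub, map_one, map_natCast]
  rcases lt_trichotomy t (m + 2) with hlt | rfl | hgt
  · rw [if_pos hlt.le, if_neg hlt.ne', if_pos (show t ≤ m + 1 by omega),
      show m + 2 - t = m + 1 - t + 1 by omega, pow_succ]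
    ring
  · rw [if_pos le_rfl, if_pos rfl, if_neg (show ¬m + 2 ≤ m + 1 by omega), Nat.sub_self]
    ring
  · rw [if_neg hgt.not_ge, if_neg hgt.ne, if_neg (show ¬t ≤ m + 1 by omega)]
    ring

lemma aLimit_eq_aStep (ht : 2 ≤ t) {s : ℕ} (hs : 1 ≤ s) :
    aLimit q k t s = aStep q k t (aLimit q k t) s := by
  rcases hs.eq_or_lt with rfl | hs
  · rw [aLimit_one q k ht, alpha_eq_aStep_aLimit_one q k (by omega)]
  · exact aLimit_eq_aStep_of_two_le q k hs

lemma coe_aP_succ_succ (ht : t ≠ 1) (ℓ s : ℕ) :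
    (aP q k (ℓ + 2) s t : ℚ⟦X⟧) = aStep q k t (fun i => aP q k (ℓ + 1) i t) s := by
  rw [aP, aStep, if_neg (fun h => ht h.2)]
  split_ifs <;>
    simp only [← Polynomial.coeToPowerSeries.ringHom_apply, map_add, map_neg, map_mul, map_pow,
      map_sum, zero_add] <;>
    simp only [Polynomial.coeToPowerSeries.ringHom_apply, Polynomial.coe_C, Polynomial.coe_X]

lemma X_pow_succ_dvd_aStep_sub {f g : ℕ → ℚ⟦X⟧} {n : ℕ} (h : ∀ i, 1 ≤ i → X ^ n ∣ f i - g i)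
    {s : ℕ} (hs : 1 ≤ s) : X ^ (n + 1) ∣ aStep q k t f s - aStep q k t g s := by
  rw [aStep, aStep, pow_succ']
  by_cases hs1 : s = 1
  · rw [if_pos hs1, if_pos hs1, add_sub_add_left_eq_sub, ← Finset.sum_sub_distrib]
    refine Finset.dvd_sum fun i hi => ?_
    rw [← mul_sub, mul_assoc]
    exact (mul_dvd_mul (dvd_pow_self X (by omega)) (h i (Finset.mem_Icc.1 hi).1)).mul_left _
  · rw [if_neg hs1, if_neg hs1, add_sub_add_left_eq_sub, ← mul_sub, mul_assoc]
    exact (mul_dvd_mul (dvd_pow_self X two_ne_zero) (h _ (by omega))).mul_left _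

lemma X_sq_dvd_aLimit_sub_aP_one (ht : 2 ≤ t) (s : ℕ) :
    (X : ℚ⟦X⟧) ^ 2 ∣ aLimit q k t s - aP q k 1 s t := by
  have hα := (X_sq_dvd_alpha q k ht).mul_left ((C (q : ℚ) * X ^ 2) ^ (s - 1))
  rw [aLimit, aP, if_neg (show ¬(s = 1 ∧ t = 1) by omega)]
  rcases lt_trichotomy s t with hlt | rfl | hgt
  · rw [if_neg hlt.not_ge, if_neg hlt.ne, Polynomial.coe_zero, sub_zero, sub_zero]
    exact hα
  · rw [if_pos le_rfl, if_pos rfl, Nat.sub_self, pow_zero]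
    push_cast
    convert hα using 1
    ring
  · rw [if_pos hgt.le, if_neg hgt.ne', Polynomial.coe_zero, sub_zero,
      show s - t = s - t - 1 + 1 by omega, pow_succ]
    exact dvd_sub hα ⟨C ((q : ℚ) - 1) * (C (q : ℚ) * X ^ 2) ^ (s - t - 1) * C (q : ℚ) * X, by ring⟩

lemma X_pow_succ_dvd_aLimit_sub_aP (ht : 2 ≤ t) {ℓ : ℕ} (hℓ : 1 ≤ ℓ) {s : ℕ} (hs : 1 ≤ s) :
    (X : ℚ⟦X⟧) ^ (ℓ + 1) ∣ aLimit q k t s - (aP q k ℓ s t : ℚ⟦X⟧) := by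
  induction ℓ, hℓ using Nat.le_induction generalizing s with
  | base => exact X_sq_dvd_aLimit_sub_aP_one q k ht s
  | succ ℓ hℓ ih =>
    obtain ⟨n, rfl⟩ : ∃ n, ℓ = n + 1 := ⟨ℓ - 1, by omega⟩
    rw [coe_aP_succ_succ q k (by omega), aLimit_eq_aStep q k ht hs]
    exact X_pow_succ_dvd_aStep_sub q k (fun i hi => ih hi) hs

end

open PowerSeries in
theorem aP_one_t_tendsto_general (q k : ℕ) (t : ℕ) (ht2 : 2 ≤ t) :
    ∀ d : ℕ, ∃ L : ℕ, ∀ ℓ : ℕ, L ≤ ℓ → 1 ≤ ℓ →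
      (aP q k ℓ 1 t).coeff d =
        PowerSeries.coeff (R := ℚ) d
          ((-(C (R := ℚ) (((q : ℚ) - 1) * (q : ℚ) ^ (2 * t - 1))) * X ^ t -
              ∑ i ∈ Finset.Icc t k,
                C (R := ℚ) (((q : ℚ) - 1) ^ 2 * (q : ℚ) ^ (3 * i - t + 1)) * X ^ (3 * i - 2 * t + 3)) *
            (1 - ∑ i ∈ Finset.Icc 1 k,
                C (R := ℚ) (((q : ℚ) - 1) * (q : ℚ) ^ (3 * i)) * X ^ (3 * i))⁻¹) := by
  intro d
  refine ⟨d, fun ℓ hdℓ hℓ => ?_⟩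
  have h := X_pow_dvd_iff.1 (X_pow_succ_dvd_aLimit_sub_aP q k ht2 hℓ le_rfl) d (by omega)
  rw [aLimit_one q k ht2, map_sub, sub_eq_zero, Polynomial.coeff_coe] at h
  exact h.symm

open PowerSeries in
/-- For each `2 ≤ t ≤ k` and each degree `d`, the `u^d`-coefficient of `a_{k,(1,t),ℓ}(u)`
is eventually constant as `ℓ → ∞`, and the limit power series is
`α_{k,(1,t)}(u) = (−(q−1)q^{2t−1}uᵗ − Σ_{i=t}^{k}(q−1)²q^{3i−t+1}u^{3i−2t+3})
  · (1 − Σ_{i=1}^{k}(q−1)q^{3i}u^{3i})⁻¹` in `ℚ[[u]]`. -/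
theorem aP_one_t_tendsto (q k : ℕ) (hq : 2 ≤ q) (hk : 1 ≤ k) (t : ℕ) (ht2 : 2 ≤ t)
    (htk : t ≤ k) :
    ∀ d : ℕ, ∃ L : ℕ, ∀ ℓ : ℕ, L ≤ ℓ → 1 ≤ ℓ →
      (aP q k ℓ 1 t).coeff d =
        PowerSeries.coeff (R := ℚ) d
          ((-(C (R := ℚ) (((q : ℚ) - 1) * (q : ℚ) ^ (2 * t - 1))) * X ^ t -
              ∑ i ∈ Finset.Icc t k,
                C (R := ℚ) (((q : ℚ) - 1) ^ 2 * (q : ℚ) ^ (3 * i - t + 1)) * X ^ (3 * i - 2 * t + 3)) *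
            (1 - ∑ i ∈ Finset.Icc 1 k,
                C (R := ℚ) (((q : ℚ) - 1) * (q : ℚ) ^ (3 * i)) * X ^ (3 * i))⁻¹) :=
  aP_one_t_tendsto_general q k t ht2
end

section
/- For every 1 ≤ s,t ≤ k and each degree d ≥ 0, the u^d-coefficient of a_{k,(s,t),ℓ}(u) is eventually constant as ℓ → ∞; denoting the limit power series by α_{k,(s,t)}(u) ∈ ℚ[[u]], for all s ≥ 2 one has: α_{k,(s,t)}(u) = qu²·α_{k,(s−1,t)}(u) if s ≠ t, and α_{k,(s,t)}(u) = −(q−1)u + qu²·α_{k,(s−1,t)}(u) if s = t. -/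
theorem PowerSeries.eq_of_forall_X_pow_dvd_sub {R : Type*} [Ring R] {φ ψ : PowerSeries R}
    (h : ∀ n, X ^ n ∣ φ - ψ) : φ = ψ := by
  ext d
  rw [← sub_eq_zero, ← map_sub]
  exact X_pow_dvd_iff.mp (h (d + 1)) d d.lt_succ_self

namespace Polynomial

variable {R : Type*} [CommRing R]

/-- The diagonal coefficients of `f`; when `X ^ (n + 1) ∣ f (n + 1) - f n` for all `n`, this is
the `X`-adic limit of `f`. -/
noncomputable def xAdicLimit (f : ℕ → R[X]) : PowerSeries R :=
  PowerSeries.mk fun d => (f d).coeff d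

variable {f g : ℕ → R[X]}

theorem X_pow_succ_dvd_sub_of_le (hf : ∀ n, X ^ (n + 1) ∣ f (n + 1) - f n) {m n : ℕ}
    (hmn : m ≤ n) : X ^ (m + 1) ∣ f n - f m := by
  induction n, hmn using Nat.le_induction with
  | base => simp
  | succ n hmn ih =>
    rw [← sub_add_sub_cancel]
    exact dvd_add ((pow_dvd_pow X (by omega)).trans (hf n)) ih

theorem coeff_xAdicLimit (hf : ∀ n, X ^ (n + 1) ∣ f (n + 1) - f n) {d n : ℕ} (hdn : d ≤ n) :
    PowerSeries.coeff d (xAdicLimit f) = (f n).coeff d := by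
  have := X_pow_dvd_iff.mp (X_pow_succ_dvd_sub_of_le hf hdn) d d.lt_succ_self
  rw [coeff_sub, sub_eq_zero] at this
  simp [xAdicLimit, this]

theorem X_pow_succ_dvd_xAdicLimit_sub (hf : ∀ n, X ^ (n + 1) ∣ f (n + 1) - f n) (n : ℕ) :
    (PowerSeries.X : PowerSeries R) ^ (n + 1) ∣ xAdicLimit f - (f n : PowerSeries R) := by
  refine PowerSeries.X_pow_dvd_iff.mpr fun d hd => ?_
  rw [map_sub, coeff_xAdicLimit hf (Nat.le_of_lt_succ hd), coeff_coe, sub_self]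

theorem xAdicLimit_eq_add_mul (hf : ∀ n, X ^ (n + 1) ∣ f (n + 1) - f n)
    (hg : ∀ n, X ^ (n + 1) ∣ g (n + 1) - g n) {a b : R[X]} (hfg : ∀ n, f (n + 1) = a + b * g n) :
    xAdicLimit f = a + b * xAdicLimit g := by
  refine PowerSeries.eq_of_forall_X_pow_dvd_sub fun n => ?_
  have hsplit : xAdicLimit f - (a + b * xAdicLimit g) =
      (xAdicLimit f - (f (n + 1) : PowerSeries R)) - b * (xAdicLimit g - (g n : PowerSeries R)) := by
    rw [hfg, coe_add, coe_mul, mul_sub]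
    abel
  rw [hsplit]
  exact dvd_sub ((pow_dvd_pow _ (by omega)).trans (X_pow_succ_dvd_xAdicLimit_sub hf (n + 1)))
    (((pow_dvd_pow _ n.le_succ).trans (X_pow_succ_dvd_xAdicLimit_sub hg n)).mul_left _)

end Polynomial

section

open Polynomial

variable {q k : ℕ}

theorem aP_add_two_of_eq {ℓ s t : ℕ} (hs : s ≠ 1) (hst : s = t) :
    aP q k (ℓ + 2) s t = -C ((q : ℚ) - 1) * X + C (q : ℚ) * X ^ 2 * aP q k (ℓ + 1) (s - 1) t := by
  rw [aP, if_neg (fun h => hs h.1), if_neg hs, if_pos hst]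

theorem aP_add_two_of_ne {ℓ s t : ℕ} (hs : s ≠ 1) (hst : s ≠ t) :
    aP q k (ℓ + 2) s t = C (q : ℚ) * X ^ 2 * aP q k (ℓ + 1) (s - 1) t := by
  rw [aP, if_neg (fun h => hs h.1), if_neg hs, if_neg hst]

theorem X_pow_add_two_dvd_aP_add_three_sub {n m t : ℕ}
    (h : ∀ s, X ^ m ∣ aP q k (n + 2) s t - aP q k (n + 1) s t) (s : ℕ) :
    X ^ (m + 2) ∣ aP q k (n + 3) s t - aP q k (n + 2) s t := by
  have hterm : ∀ (c : ℚ[X]) (i j : ℕ), X ^ (m + 2) ∣ c * X ^ (i + 2) *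
      (aP q k (n + 2) j t - aP q k (n + 1) j t) := by
    intro c i j
    rw [mul_assoc, add_comm m, pow_add]
    exact dvd_mul_of_dvd_right (mul_dvd_mul (pow_dvd_pow X (by omega)) (h j)) c
  rw [aP.eq_3 q k s t (n + 1), aP.eq_3 q k s t n]
  split_ifs with h11
  · obtain ⟨rfl, rfl⟩ := h11
    rw [add_sub_add_left_eq_sub, ← Finset.sum_sub_distrib]
    exact Finset.dvd_sum fun i _ => by rw [← mul_sub]; exact hterm _ i i
  · rw [add_sub_add_left_eq_sub, ← Finset.sum_sub_distrib]
    exact Finset.dvd_sum fun i _ => by rw [← mul_sub]; exact hterm _ i i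
  · rw [add_sub_add_left_eq_sub, ← mul_sub]
    exact hterm _ 0 (s - 1)
  · rw [← mul_sub]
    exact hterm _ 0 (s - 1)

theorem X_sq_dvd_aP_two_sub_aP_one {t : ℕ} (ht : t ≠ 0) (s : ℕ) :
    X ^ 2 ∣ aP q k 2 s t - aP q k 1 s t := by
  have hterm : ∀ (c : ℚ[X]) (i : ℕ), X ^ 2 ∣ c * X ^ (i + 2) * aP q k 1 i t := fun c i =>
    (dvd_mul_of_dvd_right (pow_dvd_pow X (by omega)) c).mul_right _
  rw [aP.eq_3 q k s t 0, aP.eq_2 q k s t]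
  split_ifs with h11 h1 hst hst
  · obtain ⟨rfl, rfl⟩ := h11
    rw [add_sub_cancel_left]
    exact Finset.dvd_sum fun i _ => hterm _ i
  · omega
  · rw [sub_zero]
    exact dvd_add (dvd_mul_of_dvd_right (pow_dvd_pow X (by omega)) _)
      (Finset.dvd_sum fun i _ => hterm _ i)
  · rw [add_sub_cancel_left]
    exact (dvd_mul_left _ _).mul_right _
  · rw [sub_zero]
    exact (dvd_mul_left _ _).mul_right _

theorem X_pow_add_two_dvd_aP_add_two_sub {t : ℕ} (ht : t ≠ 0) (n s : ℕ) :
    X ^ (n + 2) ∣ aP q k (n + 2) s t - aP q k (n + 1) s t := by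
  induction n generalizing s with
  | zero => exact X_sq_dvd_aP_two_sub_aP_one ht s
  | succ n ih => exact (pow_dvd_pow X (by omega)).trans (X_pow_add_two_dvd_aP_add_three_sub ih s)

end

open PowerSeries in
theorem aP_limits_recurrence_general (q k : ℕ) :
    ∃ α : ℕ → ℕ → PowerSeries ℚ,
      (∀ s t : ℕ, 1 ≤ s → s ≤ k → 1 ≤ t → t ≤ k →
        ∀ d : ℕ, ∃ L : ℕ, ∀ ℓ : ℕ, L ≤ ℓ → 1 ≤ ℓ →
          (aP q k ℓ s t).coeff d = PowerSeries.coeff d (α s t)) ∧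
      (∀ s t : ℕ, 2 ≤ s → s ≤ k → 1 ≤ t → t ≤ k →
        (s ≠ t → α s t = C (q : ℚ) * X ^ 2 * α (s - 1) t) ∧
        (s = t → α s t = -(C ((q : ℚ) - 1)) * X + C (q : ℚ) * X ^ 2 * α (s - 1) t)) := by
  have hcauchy : ∀ s t, t ≠ 0 → ∀ n, Polynomial.X ^ (n + 1) ∣
      aP q k (n + 2) s t - aP q k (n + 1) s t := fun s t ht n =>
    (pow_dvd_pow _ (n + 1).le_succ).trans (X_pow_add_two_dvd_aP_add_two_sub ht n s)
  refine ⟨fun s t => Polynomial.xAdicLimit fun n => aP q k (n + 1) s t, ?_, ?_⟩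
  · intro s t _ _ ht _ d
    refine ⟨d + 1, fun ℓ hdℓ _ => ?_⟩
    obtain ⟨n, rfl⟩ : ∃ n, ℓ = n + 1 := ⟨ℓ - 1, by omega⟩
    exact (Polynomial.coeff_xAdicLimit (hcauchy s t (by omega)) (by omega : d ≤ n)).symm
  · intro s t hs _ ht _
    have hs1 : s ≠ 1 := by omega
    have hrec := fun a h => Polynomial.xAdicLimit_eq_add_mul (hcauchy s t (by omega))
      (hcauchy (s - 1) t (by omega)) (a := a) (b := Polynomial.C (q : ℚ) * Polynomial.X ^ 2) h
    constructor
    · intro hst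
      simpa only [Polynomial.coe_zero, Polynomial.coe_mul, Polynomial.coe_pow, Polynomial.coe_C,
        Polynomial.coe_X, zero_add] using hrec 0 fun n => by rw [aP_add_two_of_ne hs1 hst, zero_add]
    · intro hst
      simpa only [Polynomial.coe_neg, Polynomial.coe_mul, Polynomial.coe_pow, Polynomial.coe_C,
        Polynomial.coe_X, neg_mul] using hrec _ fun n => aP_add_two_of_eq hs1 hst

open PowerSeries in
/-- For all `1 ≤ s,t ≤ k` and each degree `d`, the `u^d`-coefficient of `a_{k,(s,t),ℓ}(u)`
is eventually constant as `ℓ → ∞`; the limit power series `α_{k,(s,t)}(u)` satisfy, for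
`s ≥ 2`:  `α_{k,(s,t)} = qu²·α_{k,(s−1,t)}` if `s ≠ t`, and
`α_{k,(s,t)} = −(q−1)u + qu²·α_{k,(s−1,t)}` if `s = t`. -/
theorem aP_limits_recurrence (q k : ℕ) (hq : 2 ≤ q) (hk : 1 ≤ k) :
    ∃ α : ℕ → ℕ → PowerSeries ℚ,
      (∀ s t : ℕ, 1 ≤ s → s ≤ k → 1 ≤ t → t ≤ k →
        ∀ d : ℕ, ∃ L : ℕ, ∀ ℓ : ℕ, L ≤ ℓ → 1 ≤ ℓ →
          (aP q k ℓ s t).coeff d = PowerSeries.coeff d (α s t)) ∧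
      (∀ s t : ℕ, 2 ≤ s → s ≤ k → 1 ≤ t → t ≤ k →
        (s ≠ t → α s t = C (q : ℚ) * X ^ 2 * α (s - 1) t) ∧
        (s = t → α s t = -(C ((q : ℚ) - 1)) * X + C (q : ℚ) * X ^ 2 * α (s - 1) t)) :=
  aP_limits_recurrence_general q k
end

section
/- For each degree d ≥ 0, the u^d-coefficients of the power series α_{k,(1,1)}(u) and (for each fixed t ≥ 2) α_{k,(1,t)}(u) are eventually constant as k → ∞, and the limit power series are α₁(u) = −(q²−1)(1−q³u³)·u·(1−q⁴u³)⁻¹ and, for each t ≥ 2, α_t(u) = (−(q−1)q^{2t−1}uᵗ + (q−1)q^{2t+1}u^{t+3})·(1−q⁴u³)⁻¹, where the inverses are taken in ℚ[[u]]. -/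
/-!
Multiplying numerator and denominator of `α_{k,(1,t)}` by `1 − q³u³` telescopes both geometric
sums: the denominator becomes `(1 − q⁴u³) + O(u^{3k+3})` and the numerator becomes the numerator of
the limit plus `O(u^{3k+6−2t})`. Congruence modulo `uⁿ` survives division by series with nonzero
constant term, so the coefficients of degree `d ≤ k` already agree with those of the limit.
-/

open PowerSeries

/-- `α_{k,(1,1)}(u) = −(q²−1)u · (1 − Σ_{i=1}^{k}(q−1)q^{3i}u^{3i})⁻¹ ∈ ℚ[[u]]`. -/
noncomputable def alphaK11 (q k : ℕ) : PowerSeries ℚ :=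
  -(C ((q : ℚ) ^ 2 - 1)) * X *
    (1 - ∑ i ∈ Finset.Icc 1 k, C (((q : ℚ) - 1) * (q : ℚ) ^ (3 * i)) * X ^ (3 * i))⁻¹

/-- `α_{k,(1,t)}(u) = (−(q−1)q^{2t−1}uᵗ − Σ_{i=t}^{k}(q−1)²q^{3i−t+1}u^{3i−2t+3})
  · (1 − Σ_{i=1}^{k}(q−1)q^{3i}u^{3i})⁻¹ ∈ ℚ[[u]]` (for `2 ≤ t ≤ k`). -/
noncomputable def alphaK1t (q k t : ℕ) : PowerSeries ℚ :=
  (-(C (((q : ℚ) - 1) * (q : ℚ) ^ (2 * t - 1))) * X ^ t -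
      ∑ i ∈ Finset.Icc t k,
        C (((q : ℚ) - 1) ^ 2 * (q : ℚ) ^ (3 * i - t + 1)) * X ^ (3 * i - 2 * t + 3)) *
    (1 - ∑ i ∈ Finset.Icc 1 k, C (((q : ℚ) - 1) * (q : ℚ) ^ (3 * i)) * X ^ (3 * i))⁻¹

open Finset

theorem Finset.sum_Icc_mul_one_sub_of_mul_eq {R : Type*} [CommRing R] {f : ℕ → R} {w : R}
    {m k : ℕ} (hf : ∀ i, m ≤ i → f i * w = f (i + 1)) (hmk : m ≤ k + 1) :
    (∑ i ∈ Icc m k, f i) * (1 - w) = f m - f (k + 1) := by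
  rw [← Ico_add_one_right_eq_Icc, sum_mul, ← neg_sub (f (k + 1)), ← sum_Ico_sub f hmk,
    ← sum_neg_distrib]
  refine sum_congr rfl fun i hi => ?_
  rw [mul_one_sub, hf i (mem_Ico.mp hi).1, neg_sub]

namespace PowerSeries

theorem coeff_eq_of_X_pow_dvd_sub {R : Type*} [CommRing R] {f g : R⟦X⟧} {d : ℕ}
    (h : X ^ (d + 1) ∣ f - g) : coeff d f = coeff d g := by
  rw [← sub_eq_zero, ← map_sub]
  exact X_pow_dvd_iff.mp h d d.lt_succ_self

theorem X_pow_dvd_mul_inv_sub_mul_inv {k : Type*} [Field k] {n : ℕ} {a a' b b' : k⟦X⟧}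
    (hb : constantCoeff b ≠ 0) (ha : X ^ n ∣ a' - a) (hbb : X ^ n ∣ b' - b) :
    X ^ n ∣ a' * b'⁻¹ - a * b⁻¹ := by
  rcases n.eq_zero_or_pos with rfl | hn
  · simp
  have hb' : constantCoeff b' ≠ 0 := by
    have := X_pow_dvd_iff.mp hbb 0 hn
    rwa [coeff_zero_eq_constantCoeff_apply, map_sub, sub_eq_zero.mp this] at *
  have key : a' * b'⁻¹ - a * b⁻¹ = ((a' - a) * b - a * (b' - b)) * (b'⁻¹ * b⁻¹) := by
    linear_combination (a * b⁻¹) * PowerSeries.mul_inv_cancel b' hb' -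
      (a' * b'⁻¹) * PowerSeries.mul_inv_cancel b hb
  rw [key]
  exact (dvd_sub (ha.mul_right b) (hbb.mul_left a)).mul_right _

theorem mul_inv_eq_mul_mul_inv_mul {k : Type*} [Field k] (a b : k⟦X⟧) {c : k⟦X⟧}
    (hc : constantCoeff c ≠ 0) : a * b⁻¹ = (a * c) * (b * c)⁻¹ := by
  rw [PowerSeries.mul_inv_rev, mul_assoc, ← mul_assoc c, PowerSeries.mul_inv_cancel c hc, one_mul]

end PowerSeries

section AlphaK

variable {R : Type*} [CommRing R] (q : R)

theorem alphaK_denominator_mul_one_sub (k : ℕ) :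
    (1 - ∑ i ∈ Icc 1 k, C ((q - 1) * q ^ (3 * i)) * X ^ (3 * i)) * (1 - C (q ^ 3) * X ^ 3) =
      (1 - C (q ^ 4) * X ^ 3) + C ((q - 1) * q ^ (3 * (k + 1))) * X ^ (3 * (k + 1)) := by
  have hf : ∀ i, 1 ≤ i → C ((q - 1) * q ^ (3 * i)) * X ^ (3 * i) * (C (q ^ 3) * X ^ 3) =
      C ((q - 1) * q ^ (3 * (i + 1))) * (X : R⟦X⟧) ^ (3 * (i + 1)) := by
    intro i _
    simp only [map_mul, map_sub, map_one, map_pow]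
    ring
  rw [sub_mul, sum_Icc_mul_one_sub_of_mul_eq hf (by omega)]
  simp only [map_mul, map_sub, map_one, map_pow]
  ring

theorem alphaK1t_numerator_mul_one_sub {t : ℕ} (ht : 1 ≤ t) {k : ℕ} (htk : t ≤ k + 1) :
    (-(C ((q - 1) * q ^ (2 * t - 1))) * X ^ t -
        ∑ i ∈ Icc t k, C ((q - 1) ^ 2 * q ^ (3 * i - t + 1)) * X ^ (3 * i - 2 * t + 3)) *
        (1 - C (q ^ 3) * X ^ 3) =
      (-(C ((q - 1) * q ^ (2 * t - 1))) * X ^ t + C ((q - 1) * q ^ (2 * t + 1)) * X ^ (t + 3)) +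
        C ((q - 1) ^ 2 * q ^ (3 * (k + 1) - t + 1)) * X ^ (3 * (k + 1) - 2 * t + 3) := by
  have hf : ∀ i, t ≤ i →
      C ((q - 1) ^ 2 * q ^ (3 * i - t + 1)) * X ^ (3 * i - 2 * t + 3) * (C (q ^ 3) * X ^ 3) =
        C ((q - 1) ^ 2 * q ^ (3 * (i + 1) - t + 1)) * (X : R⟦X⟧) ^ (3 * (i + 1) - 2 * t + 3) := by
    intro i hi
    rw [show 3 * (i + 1) - t + 1 = (3 * i - t + 1) + 3 by omega,
      show 3 * (i + 1) - 2 * t + 3 = (3 * i - 2 * t + 3) + 3 by omega]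
    simp only [map_mul, map_sub, map_one, map_pow]
    ring
  obtain ⟨s, rfl⟩ : ∃ s, t = s + 1 := ⟨t - 1, by omega⟩
  rw [sub_mul, sum_Icc_mul_one_sub_of_mul_eq hf htk, show 2 * (s + 1) - 1 = 2 * s + 1 by omega,
    show 3 * (s + 1) - (s + 1) + 1 = 2 * (s + 1) + 1 by omega,
    show 3 * (s + 1) - 2 * (s + 1) + 3 = s + 1 + 3 by omega]
  simp only [map_mul, map_sub, map_one, map_pow]
  ring

end AlphaK

theorem alphaK_tendsto_general (q : ℕ) :
    (∀ d : ℕ, ∃ K : ℕ, ∀ k : ℕ, K ≤ k → 1 ≤ k →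
      PowerSeries.coeff d (alphaK11 q k) =
        PowerSeries.coeff d
          (-(C ((q : ℚ) ^ 2 - 1)) * (1 - C ((q : ℚ) ^ 3) * X ^ 3) * X *
            (1 - C ((q : ℚ) ^ 4) * X ^ 3)⁻¹)) ∧
    (∀ t : ℕ, 2 ≤ t → ∀ d : ℕ, ∃ K : ℕ, ∀ k : ℕ, K ≤ k → t ≤ k →
      PowerSeries.coeff d (alphaK1t q k t) =
        PowerSeries.coeff d
          ((-(C (((q : ℚ) - 1) * (q : ℚ) ^ (2 * t - 1))) * X ^ t +
              C (((q : ℚ) - 1) * (q : ℚ) ^ (2 * t + 1)) * X ^ (t + 3)) *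
            (1 - C ((q : ℚ) ^ 4) * X ^ 3)⁻¹)) := by
  have hw : constantCoeff (1 - C ((q : ℚ) ^ 3) * X ^ 3) ≠ 0 := by simp
  have hE : constantCoeff (1 - C ((q : ℚ) ^ 4) * X ^ 3) ≠ 0 := by simp
  refine ⟨fun d => ⟨d, fun k hdk _ => coeff_eq_of_X_pow_dvd_sub ?_⟩,
    fun t ht d => ⟨d, fun k hdk htk => coeff_eq_of_X_pow_dvd_sub ?_⟩⟩
  · rw [alphaK11, mul_inv_eq_mul_mul_inv_mul _ _ hw, alphaK_denominator_mul_one_sub]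
    refine X_pow_dvd_mul_inv_sub_mul_inv hE ⟨0, by ring⟩ ?_
    rw [add_sub_cancel_left]
    exact (pow_dvd_pow X (by omega)).mul_left _
  · rw [alphaK1t, mul_inv_eq_mul_mul_inv_mul _ _ hw, alphaK_denominator_mul_one_sub,
      alphaK1t_numerator_mul_one_sub _ (by omega) (by omega)]
    refine X_pow_dvd_mul_inv_sub_mul_inv hE ?_ ?_ <;> rw [add_sub_cancel_left] <;>
      exact (pow_dvd_pow X (by omega)).mul_left _

/-- The `u^d`-coefficients of `α_{k,(1,1)}(u)` and `α_{k,(1,t)}(u)` are eventually constant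
as `k → ∞`, with limits `α₁(u) = −(q²−1)(1−q³u³)·u·(1−q⁴u³)⁻¹` and, for `t ≥ 2`,
`α_t(u) = (−(q−1)q^{2t−1}uᵗ + (q−1)q^{2t+1}u^{t+3})·(1−q⁴u³)⁻¹`. -/
theorem alphaK_tendsto (q : ℕ) (hq : 2 ≤ q) :
    (∀ d : ℕ, ∃ K : ℕ, ∀ k : ℕ, K ≤ k → 1 ≤ k →
      PowerSeries.coeff d (alphaK11 q k) =
        PowerSeries.coeff d
          (-(C ((q : ℚ) ^ 2 - 1)) * (1 - C ((q : ℚ) ^ 3) * X ^ 3) * X *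
            (1 - C ((q : ℚ) ^ 4) * X ^ 3)⁻¹)) ∧
    (∀ t : ℕ, 2 ≤ t → ∀ d : ℕ, ∃ K : ℕ, ∀ k : ℕ, K ≤ k → t ≤ k →
      PowerSeries.coeff d (alphaK1t q k t) =
        PowerSeries.coeff d
          ((-(C (((q : ℚ) - 1) * (q : ℚ) ^ (2 * t - 1))) * X ^ t +
              C (((q : ℚ) - 1) * (q : ℚ) ^ (2 * t + 1)) * X ^ (t + 3)) *
            (1 - C ((q : ℚ) ^ 4) * X ^ 3)⁻¹)) :=
  alphaK_tendsto_general q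
end

section
/- In ℚ[[u]] the following identity holds: 1 + Σ_{j=2}^{∞} q^{2j−3}u^{2j−3}·α_j(u) + α₁(u)·Σ_{j=1}^{∞} q^{4j−1}(q−1)u^{3j−1} = (1 − q³u³)(1 − q⁶u³) · ((1 − q⁴u³)²)⁻¹, where both infinite sums converge in ℚ[[u]] (coefficientwise, since the order of the j-th term tends to infinity with j). -/
open PowerSeries

/-- `α₁(u) = −(q²−1)(1−q³u³)·u·(1−q⁴u³)⁻¹ ∈ ℚ[[u]]`. -/
noncomputable def alphaOne (q : ℕ) : PowerSeries ℚ :=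
  -(C ((q : ℚ) ^ 2 - 1)) * (1 - C ((q : ℚ) ^ 3) * X ^ 3) * X *
    (1 - C ((q : ℚ) ^ 4) * X ^ 3)⁻¹

/-- `α_t(u) = (−(q−1)q^{2t−1}uᵗ + (q−1)q^{2t+1}u^{t+3})·(1−q⁴u³)⁻¹ ∈ ℚ[[u]]` for `t ≥ 2`. -/
noncomputable def alphaT (q t : ℕ) : PowerSeries ℚ :=
  (-(C (((q : ℚ) - 1) * (q : ℚ) ^ (2 * t - 1))) * X ^ t +
      C (((q : ℚ) - 1) * (q : ℚ) ^ (2 * t + 1)) * X ^ (t + 3)) *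
    (1 - C ((q : ℚ) ^ 4) * X ^ 3)⁻¹

/-! Both sums are geometric in `w = q⁴u³`: the `j`-th terms are `w^(j-1)` times a fixed series.
Hence a partial sum up to `J` differs from the value of the full series by a multiple of `w^J`, so
of `u^(3J)`, and that value is the right-hand side, a rational identity which holds after clearing the
denominator `(1 − q⁴u³)²`. -/

theorem PowerSeries.geom_sum_eq_mul_inv {k : Type*} [Field k] {x : k⟦X⟧}
    (hx : constantCoeff x = 0) (n : ℕ) :
    ∑ i ∈ Finset.range n, x ^ i = (1 - x ^ n) * (1 - x)⁻¹ :=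
  (eq_mul_inv_iff_mul_eq (by simp [hx])).2 (geom_sum_mul_neg x n)

namespace AlphaSeries

variable (q : ℕ)

noncomputable def ratio : ℚ⟦X⟧ := C ((q : ℚ) ^ 4) * X ^ 3

theorem constantCoeff_ratio : constantCoeff (ratio q) = 0 := by
  simp [ratio]

theorem X_pow_dvd_ratio_pow (n : ℕ) : X ^ (3 * n) ∣ ratio q ^ n := by
  rw [pow_mul]
  exact pow_dvd_pow_of_dvd (dvd_mul_left _ _) n

theorem alphaT_term_eq (k : ℕ) :
    C ((q : ℚ) ^ (2 * (2 + k) - 3)) * X ^ (2 * (2 + k) - 3) * alphaT q (2 + k) =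
      ratio q ^ (k + 1) * (C ((q : ℚ) - 1) * (C ((q : ℚ) ^ 2) * X ^ 3 - 1) *
        (1 - ratio q)⁻¹) := by
  rw [show 2 * (2 + k) - 3 = 2 * k + 1 by omega]
  simp only [alphaT, ratio, show 2 * (2 + k) - 1 = 2 * k + 3 by omega,
    show 2 * (2 + k) + 1 = 2 * k + 5 by omega, map_mul, map_pow, map_sub, map_one]
  ring

theorem alphaOne_factor_term_eq (k : ℕ) :
    C ((q : ℚ) ^ (4 * (1 + k) - 1) * ((q : ℚ) - 1)) * X ^ (3 * (1 + k) - 1) =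
      ratio q ^ k * (C ((q : ℚ) ^ 3 * ((q : ℚ) - 1)) * X ^ 2) := by
  rw [show 4 * (1 + k) - 1 = 4 * k + 3 by omega, show 3 * (1 + k) - 1 = 3 * k + 2 by omega]
  simp only [ratio, map_mul, map_pow]
  ring

theorem sum_alphaT_terms (n : ℕ) :
    ∑ j ∈ Finset.Icc 2 (n + 1), C ((q : ℚ) ^ (2 * j - 3)) * X ^ (2 * j - 3) * alphaT q j =
      C ((q : ℚ) - 1) * (C ((q : ℚ) ^ 2) * X ^ 3 - 1) * ratio q * (1 - ratio q ^ n) *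
        (1 - ratio q)⁻¹ ^ 2 := by
  rw [← Finset.Ico_add_one_right_eq_Icc, Finset.sum_Ico_eq_sum_range,
    show n + 1 + 1 - 2 = n by omega]
  simp only [alphaT_term_eq, pow_succ, ← Finset.sum_mul,
    PowerSeries.geom_sum_eq_mul_inv (constantCoeff_ratio q)]
  ring

theorem sum_alphaOne_factor_terms (n : ℕ) :
    ∑ j ∈ Finset.Icc 1 (n + 1),
        C ((q : ℚ) ^ (4 * j - 1) * ((q : ℚ) - 1)) * X ^ (3 * j - 1) =
      C ((q : ℚ) ^ 3 * ((q : ℚ) - 1)) * X ^ 2 * (1 - ratio q ^ (n + 1)) *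
        (1 - ratio q)⁻¹ := by
  rw [← Finset.Ico_add_one_right_eq_Icc, Finset.sum_Ico_eq_sum_range,
    show n + 1 + 1 - 1 = n + 1 by omega]
  simp only [alphaOne_factor_term_eq, ← Finset.sum_mul,
    PowerSeries.geom_sum_eq_mul_inv (constantCoeff_ratio q)]
  ring

theorem full_series_eq :
    1 + C ((q : ℚ) - 1) * (C ((q : ℚ) ^ 2) * X ^ 3 - 1) * ratio q * (1 - ratio q)⁻¹ ^ 2 +
        alphaOne q * (C ((q : ℚ) ^ 3 * ((q : ℚ) - 1)) * X ^ 2 * (1 - ratio q)⁻¹) =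
      (1 - C ((q : ℚ) ^ 3) * X ^ 3) * (1 - C ((q : ℚ) ^ 6) * X ^ 3) *
        ((1 - C ((q : ℚ) ^ 4) * X ^ 3) ^ 2)⁻¹ := by
  have hinv : (1 - ratio q) * (1 - ratio q)⁻¹ = 1 :=
    PowerSeries.mul_inv_cancel _ (by simp [constantCoeff_ratio])
  rw [sq (1 - C _ * X ^ 3), PowerSeries.mul_inv_rev]
  simp only [alphaOne, ratio, map_mul, map_pow, map_sub, map_one] at hinv ⊢
  -- with `W = 1 - ratio q`, the difference of the two sides is `1 - W² W⁻²`
  linear_combination (-(1 + (1 - C (q : ℚ) ^ 4 * X ^ 3) * (1 - C (q : ℚ) ^ 4 * X ^ 3)⁻¹)) * hinv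

theorem X_pow_dvd_partial_sum_sub (n : ℕ) :
    X ^ (3 * (n + 1)) ∣
      1 + (∑ j ∈ Finset.Icc 2 (n + 1),
          C ((q : ℚ) ^ (2 * j - 3)) * X ^ (2 * j - 3) * alphaT q j) +
        alphaOne q *
          ∑ j ∈ Finset.Icc 1 (n + 1),
            C ((q : ℚ) ^ (4 * j - 1) * ((q : ℚ) - 1)) * X ^ (3 * j - 1) -
      (1 - C ((q : ℚ) ^ 3) * X ^ 3) * (1 - C ((q : ℚ) ^ 6) * X ^ 3) *
        ((1 - C ((q : ℚ) ^ 4) * X ^ 3) ^ 2)⁻¹ := by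
  rw [sum_alphaT_terms, sum_alphaOne_factor_terms, ← full_series_eq]
  refine Dvd.dvd.trans (X_pow_dvd_ratio_pow q (n + 1)) (Dvd.intro
    (-(C ((q : ℚ) - 1) * (C ((q : ℚ) ^ 2) * X ^ 3 - 1) * (1 - ratio q)⁻¹ ^ 2 +
      alphaOne q * (C ((q : ℚ) ^ 3 * ((q : ℚ) - 1)) * X ^ 2 * (1 - ratio q)⁻¹))) ?_)
  ring

end AlphaSeries

theorem alpha_series_identity_general (q : ℕ) :
    ∀ d : ℕ, ∃ J : ℕ, ∀ J' : ℕ, J ≤ J' →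
      PowerSeries.coeff d
          (1 + (∑ j ∈ Finset.Icc 2 J',
              C ((q : ℚ) ^ (2 * j - 3)) * X ^ (2 * j - 3) * alphaT q j) +
            alphaOne q *
              ∑ j ∈ Finset.Icc 1 J',
                C ((q : ℚ) ^ (4 * j - 1) * ((q : ℚ) - 1)) * X ^ (3 * j - 1)) =
        PowerSeries.coeff d
          ((1 - C ((q : ℚ) ^ 3) * X ^ 3) * (1 - C ((q : ℚ) ^ 6) * X ^ 3) *
            ((1 - C ((q : ℚ) ^ 4) * X ^ 3) ^ 2)⁻¹) := by
  intro d
  refine ⟨d + 1, fun J' hJ' => ?_⟩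
  obtain ⟨n, rfl⟩ : ∃ n, J' = n + 1 := ⟨J' - 1, by omega⟩
  rw [← sub_eq_zero, ← map_sub]
  exact PowerSeries.X_pow_dvd_iff.1 (AlphaSeries.X_pow_dvd_partial_sum_sub q n) d (by omega)

/-- In `ℚ[[u]]`:
`1 + Σ_{j=2}^{∞} q^{2j−3}u^{2j−3}·α_j(u) + α₁(u)·Σ_{j=1}^{∞} q^{4j−1}(q−1)u^{3j−1}
  = (1 − q³u³)(1 − q⁶u³)·((1 − q⁴u³)²)⁻¹`,
where the infinite sums converge coefficientwise: for each degree `d`, the `u^d`-coefficient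
of the partial sums up to `J'` is eventually (in `J'`) equal to that of the right-hand side. -/
theorem alpha_series_identity (q : ℕ) (hq : 2 ≤ q) :
    ∀ d : ℕ, ∃ J : ℕ, ∀ J' : ℕ, J ≤ J' →
      PowerSeries.coeff d
          (1 + (∑ j ∈ Finset.Icc 2 J',
              C ((q : ℚ) ^ (2 * j - 3)) * X ^ (2 * j - 3) * alphaT q j) +
            alphaOne q *
              ∑ j ∈ Finset.Icc 1 J',
                C ((q : ℚ) ^ (4 * j - 1) * ((q : ℚ) - 1)) * X ^ (3 * j - 1)) =
        PowerSeries.coeff d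
          ((1 - C ((q : ℚ) ^ 3) * X ^ 3) * (1 - C ((q : ℚ) ^ 6) * X ^ 3) *
            ((1 - C ((q : ℚ) ^ 4) * X ^ 3) ^ 2)⁻¹) :=
  alpha_series_identity_general q
end
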